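/- arXiv:2503.10327 — 7 statements merged into one kernel-verified Lean document; each statement's English description precedes it below -/
import Mathlib

section
/- Proposition: Let σ(x, y) = (x ⇀ y, x ↼ y) be an involutive left-non-degenerate quiver-theoretic Yang–Baxter map on a quiver 𝒜. For arrows x, y with s(x) = s(y), let x ⋆ y := (x ⇀ —)⁻¹(y), the unique arrow with source t(x) such that x ⇀ (x ⋆ y) = y. Then (𝒜, ⋆) is a left-non-degenerate weak RC-system in which x ⋆ y is defined whenever s(x) = s(y): (a) s(x ⋆ y) = t(x) and t(x ⋆ y) = t(y ⋆ x) for all arrows x, y with s(x) = s(y); (b) the RC-law (x ⋆ y) ⋆ (x ⋆ z) = (y ⋆ x) ⋆ (y ⋆ z) holds for all arrows x, y, z with a common source; (c) for every arrow x the map y ↦ x ⋆ y is a bijection from arrows with source s(x) to arrows with source t(x). -/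
/-!
Proposition: an involutive left-non-degenerate quiver-theoretic Yang–Baxter map
`σ(x,y) = (x ⇀ y, x ↼ y)` on a quiver `(A, s, t)` yields, via
`x ⋆ y := (x ⇀ —)⁻¹(y)` (defined whenever `s x = s y`), a left-non-degenerate
weak RC-system: (a) `s (x ⋆ y) = t x` and `t (x ⋆ y) = t (y ⋆ x)`;
(b) the RC-law; (c) each map `y ↦ x ⋆ y` is a bijection from arrows with source
`s x` to arrows with source `t x`.
-/

theorem braided_quivers_are_weak_RC_systems
    {Λ A : Type*} (s t : A → Λ) (hd tl : A → A → A)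
    -- σ is a morphism of quivers
    (hs : ∀ x y, t x = s y → s (hd x y) = s x)
    (hm : ∀ x y, t x = s y → t (hd x y) = s (tl x y))
    (ht : ∀ x y, t x = s y → t (tl x y) = t y)
    -- the Yang–Baxter equation in components
    (yb1 : ∀ a b c, t a = s b → t b = s c →
      hd (hd a b) (hd (tl a b) c) = hd a (hd b c))
    (yb2 : ∀ a b c, t a = s b → t b = s c →
      tl (hd a b) (hd (tl a b) c) = hd (tl a (hd b c)) (tl b c))
    (yb3 : ∀ a b c, t a = s b → t b = s c →
      tl (tl a b) c = tl (tl a (hd b c)) (tl b c))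
    -- involutivity
    (inv1 : ∀ a b, t a = s b → hd (hd a b) (tl a b) = a)
    (inv2 : ∀ a b, t a = s b → tl (hd a b) (tl a b) = b)
    -- left-non-degeneracy
    (lnd : ∀ x : A, Function.Bijective fun y : {y : A // s y = t x} =>
      (⟨hd x y.1, hs x y.1 y.2.symm⟩ : {z : A // s z = s x}))
    -- the operation `⋆`: `x ⋆ y := (x ⇀ —)⁻¹(y)` is the unique arrow with
    -- source `t x` such that `x ⇀ (x ⋆ y) = y`
    (star : A → A → A)
    (hstar : ∀ x y, s x = s y → s (star x y) = t x ∧ hd x (star x y) = y)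
    :
    -- (a) source and target of `x ⋆ y`
    (∀ x y, s x = s y → s (star x y) = t x ∧ t (star x y) = t (star y x)) ∧
    -- (b) the RC-law
    (∀ x y z, s x = s y → s x = s z →
      star (star x y) (star x z) = star (star y x) (star y z)) ∧
    -- (c) left-non-degeneracy of `⋆`
    (∀ x : A, Function.Bijective fun y : {y : A // s y = s x} =>
      (⟨star x y.1, (hstar x y.1 y.2.symm).1⟩ : {z : A // s z = t x})) := by
 
  -- uniqueness of `star`: `star x (hd x u) = u` when `s u = t x`
  have uniq : ∀ x u, s u = t x → star x (hd x u) = u := by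
    intro x u hu
    have hsx : s (hd x u) = s x := hs x u hu.symm
    obtain ⟨h1, h2⟩ := hstar x (hd x u) hsx.symm
    have h := (lnd x).1 (a₁ := ⟨star x (hd x u), h1⟩) (a₂ := ⟨u, hu⟩)
      (Subtype.ext h2)
    exact congrArg Subtype.val h
  have key : ∀ x y, s x = s y → star y x = tl x (star x y) := by
    intro x y hxy
    obtain ⟨h1, h2⟩ := hstar x y hxy
    have hc : t x = s (star x y) := h1.symm
    have hv1 : s (tl x (star x y)) = t y := by
      rw [← hm x _ hc, h2]
    have hv2 : hd y (tl x (star x y)) = x := by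
      have h := inv1 x (star x y) hc
      rwa [h2] at h
    have h := uniq y (tl x (star x y)) hv1
    rw [hv2] at h
    exact h
  have ta : ∀ x y, s x = s y → t (star x y) = t (star y x) := by
    intro x y hxy
    rw [key x y hxy, ht x _ ((hstar x y hxy).1.symm)]
  refine ⟨fun x y h => ⟨(hstar x y h).1, ta x y h⟩, ?_, ?_⟩
  · intro x y z hxy hxz
    obtain ⟨hu1, hu2⟩ := hstar x y hxy
    obtain ⟨hw1, hw2⟩ := hstar x z hxz
    set u := star x y with hu
    set w := star x z with hw
    have huw : s u = s w := by rw [hu1, hw1]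
    obtain ⟨hp1, hp2⟩ := hstar u w huw
    set p := star u w with hp
    have hcu : t x = s u := hu1.symm
    have hcp : t u = s p := hp1.symm
    have hvs : s (tl x u) = t y := by rw [← hm x u hcu, hu2]
    have hps : s p = t (tl x u) := by rw [ht x u hcu, hp1]
    have key2 : hd y (hd (tl x u) p) = z := by
      rw [← hu2, yb1 x u p hcu hcp, hp2, hw2]
    have h3 : star y (hd y (hd (tl x u) p)) = hd (tl x u) p :=
      uniq y (hd (tl x u) p) (by rw [hs (tl x u) p hps.symm, hvs])
    rw [key2] at h3
    rw [key x y hxy, ← hu, h3, uniq (tl x u) p hps]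
  · intro x
    refine Function.bijective_iff_has_inverse.mpr
      ⟨fun z => ⟨hd x z.1, hs x z.1 z.2.symm⟩, ?_, ?_⟩
    · intro y; exact Subtype.ext (hstar x y.1 y.2.symm).2
    · intro z; exact Subtype.ext (uniq x z.1 z.2)
end

section
/- Proposition: Let σ(x, y) = (x ⇀ y, x ↼ y) be an involutive right-non-degenerate quiver-theoretic Yang–Baxter map on a quiver 𝒜. For arrows x, y with t(x) = t(y), let x • y := (— ↼ x)⁻¹(y), the unique arrow with target s(x) such that (x • y) ↼ x = y. Then (𝒜, •) is a left-non-degenerate weak co-RC-system in which x • y is defined whenever t(x) = t(y): (a) t(x • y) = s(x) and s(x • y) = s(y • x) for all arrows x, y with t(x) = t(y); (b) the co-RC-law (x • y) • (x • z) = (y • x) • (y • z) holds for all arrows x, y, z with a common target; (c) for every arrow x the map y ↦ x • y is a bijection from arrows with target t(x) to arrows with target s(x). -/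
/-!
Proposition: an involutive right-non-degenerate quiver-theoretic Yang–Baxter map
`σ(x,y) = (x ⇀ y, x ↼ y)` on a quiver `(A, s, t)` yields, via
`x • y := (— ↼ x)⁻¹(y)` (defined whenever `t x = t y`), a left-non-degenerate
weak co-RC-system: (a) `t (x • y) = s x` and `s (x • y) = s (y • x)`;
(b) the co-RC-law; (c) each map `y ↦ x • y` is a bijection from arrows with
target `t x` to arrows with target `s x`.
-/

theorem braided_quivers_are_weak_coRC_systems
    {Λ A : Type*} (s t : A → Λ) (hd tl : A → A → A)
    -- σ is a morphism of quivers
    (hs : ∀ x y, t x = s y → s (hd x y) = s x)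
    (hm : ∀ x y, t x = s y → t (hd x y) = s (tl x y))
    (ht : ∀ x y, t x = s y → t (tl x y) = t y)
    -- the Yang–Baxter equation in components
    (yb1 : ∀ a b c, t a = s b → t b = s c →
      hd (hd a b) (hd (tl a b) c) = hd a (hd b c))
    (yb2 : ∀ a b c, t a = s b → t b = s c →
      tl (hd a b) (hd (tl a b) c) = hd (tl a (hd b c)) (tl b c))
    (yb3 : ∀ a b c, t a = s b → t b = s c →
      tl (tl a b) c = tl (tl a (hd b c)) (tl b c))
    -- involutivity
    (inv1 : ∀ a b, t a = s b → hd (hd a b) (tl a b) = a)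
    (inv2 : ∀ a b, t a = s b → tl (hd a b) (tl a b) = b)
    -- right-non-degeneracy
    (rnd : ∀ y : A, Function.Bijective fun x : {x : A // t x = s y} =>
      (⟨tl x.1 y, ht x.1 y x.2⟩ : {z : A // t z = t y}))
    -- the operation `•`: `x • y := (— ↼ x)⁻¹(y)` is the unique arrow with
    -- target `s x` such that `(x • y) ↼ x = y`
    (bul : A → A → A)
    (hbul : ∀ x y, t x = t y → t (bul x y) = s x ∧ tl (bul x y) x = y)
    :
    -- (a) source and target of `x • y`
    (∀ x y, t x = t y → t (bul x y) = s x ∧ s (bul x y) = s (bul y x)) ∧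
    -- (b) the co-RC-law
    (∀ x y z, t x = t y → t x = t z →
      bul (bul x y) (bul x z) = bul (bul y x) (bul y z)) ∧
    -- (c) left-non-degeneracy of `•`
    (∀ x : A, Function.Bijective fun y : {y : A // t y = t x} =>
      (⟨bul x y.1, (hbul x y.1 y.2.symm).1⟩ : {z : A // t z = s x})) := by

  -- uniqueness from right-non-degeneracy
  have uniq : ∀ x u, t u = s x → u = bul x (tl u x) := by
    intro x u h
    have hty : t x = t (tl u x) := (ht u x h).symm
    obtain ⟨h1, h2⟩ := hbul x (tl u x) hty
    have heq : (⟨tl u x, ht u x h⟩ : {z : A // t z = t x})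
        = ⟨tl (bul x (tl u x)) x, ht _ x h1⟩ := Subtype.ext h2.symm
    have := (rnd x).1 (a₁ := ⟨u, h⟩) (a₂ := ⟨bul x (tl u x), h1⟩) heq
    exact congrArg Subtype.val this
  -- key : hd (bul x y) x = bul y x
  have key : ∀ x y, t x = t y → hd (bul x y) x = bul y x := by
    intro x y h
    obtain ⟨h1, h2⟩ := hbul x y h
    have e1 := inv2 (bul x y) x h1
    rw [h2] at e1
    have e2 : t (hd (bul x y) x) = s y := by rw [hm _ _ h1, h2]
    have := uniq y (hd (bul x y) x) e2
    rwa [e1] at this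
  have parta : ∀ x y, t x = t y → t (bul x y) = s x ∧ s (bul x y) = s (bul y x) := by
    intro x y h
    obtain ⟨h1, h2⟩ := hbul x y h
    refine ⟨h1, ?_⟩
    rw [← key x y h, hs _ _ h1]
  refine ⟨parta, ?_, ?_⟩
  · intro x y z hxy hxz
    obtain ⟨tq, h2q⟩ := hbul x y hxy
    obtain ⟨tp, h2p⟩ := hbul x z hxz
    obtain ⟨tw, hw⟩ := hbul (bul x y) (bul x z) (tq.trans tp.symm)
    set q := bul x y
    set p := bul x z
    set w := bul q p
    have e3 := yb3 w q x tw tq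
    rw [hw, h2q, key x y hxy, h2p] at e3
    have sq : s (bul x y) = s (bul y x) := (parta x y hxy).2
    have tw' : t w = s (bul y x) := tw.trans sq
    have tq' : t (bul y x) = s y := (hbul y x hxy.symm).1
    have e4 : t (tl w (bul y x)) = s y := by rw [ht _ _ tw', tq']
    have e5 := uniq y (tl w (bul y x)) e4
    rw [← e3] at e5
    have e6 := uniq (bul y x) w tw'
    rw [e5] at e6
    exact e6
  · intro x
    constructor
    · intro a b hab
      have h1 := congrArg (fun z : {z : A // t z = s x} => tl z.1 x) hab
      simp only [(hbul x a.1 a.2.symm).2, (hbul x b.1 b.2.symm).2] at h1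
      exact Subtype.ext h1
    · intro z
      refine ⟨⟨tl z.1 x, ht z.1 x z.2⟩, ?_⟩
      exact Subtype.ext (uniq x z.1 z.2).symm
end

section
/- Proposition (weak RLC-system): Let σ(x, y) = (x ⇀ y, x ↼ y) be an involutive non-degenerate quiver-theoretic Yang–Baxter map on a quiver 𝒜. Define x ⋆ y := (x ⇀ —)⁻¹(y) for arrows x, y with s(x) = s(y), and x • y := (— ↼ x)⁻¹(y) for arrows x, y with t(x) = t(y). Then the compatibility conditions of a weak RLC-system hold: (x ⋆ y) • (y ⋆ x) = x for all arrows x, y with s(x) = s(y), and (x • y) ⋆ (y • x) = x for all arrows x, y with t(x) = t(y). -/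
/-!
Proposition (weak RLC-system): for an involutive non-degenerate quiver-theoretic
Yang–Baxter map `σ(x,y) = (x ⇀ y, x ↼ y)` on a quiver `(A, s, t)`, with
`x ⋆ y := (x ⇀ —)⁻¹(y)` (for `s x = s y`) and `x • y := (— ↼ x)⁻¹(y)`
(for `t x = t y`), the compatibility conditions of a weak RLC-system hold:
`(x ⋆ y) • (y ⋆ x) = x` whenever `s x = s y`, and `(x • y) ⋆ (y • x) = x`
whenever `t x = t y`.
-/

theorem braided_quivers_are_weak_RLC_systems
    {Λ A : Type*} (s t : A → Λ) (hd tl : A → A → A)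
    -- σ is a morphism of quivers
    (hs : ∀ x y, t x = s y → s (hd x y) = s x)
    (hm : ∀ x y, t x = s y → t (hd x y) = s (tl x y))
    (ht : ∀ x y, t x = s y → t (tl x y) = t y)
    -- the Yang–Baxter equation in components
    (yb1 : ∀ a b c, t a = s b → t b = s c →
      hd (hd a b) (hd (tl a b) c) = hd a (hd b c))
    (yb2 : ∀ a b c, t a = s b → t b = s c →
      tl (hd a b) (hd (tl a b) c) = hd (tl a (hd b c)) (tl b c))
    (yb3 : ∀ a b c, t a = s b → t b = s c →
      tl (tl a b) c = tl (tl a (hd b c)) (tl b c))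
    -- involutivity
    (inv1 : ∀ a b, t a = s b → hd (hd a b) (tl a b) = a)
    (inv2 : ∀ a b, t a = s b → tl (hd a b) (tl a b) = b)
    -- left-non-degeneracy
    (lnd : ∀ x : A, Function.Bijective fun y : {y : A // s y = t x} =>
      (⟨hd x y.1, hs x y.1 y.2.symm⟩ : {z : A // s z = s x}))
    -- right-non-degeneracy
    (rnd : ∀ y : A, Function.Bijective fun x : {x : A // t x = s y} =>
      (⟨tl x.1 y, ht x.1 y x.2⟩ : {z : A // t z = t y}))
    -- the operation `⋆`: `x ⋆ y := (x ⇀ —)⁻¹(y)` is the unique arrow with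
    -- source `t x` such that `x ⇀ (x ⋆ y) = y`
    (star : A → A → A)
    (hstar : ∀ x y, s x = s y → s (star x y) = t x ∧ hd x (star x y) = y)
    -- the operation `•`: `x • y := (— ↼ x)⁻¹(y)` is the unique arrow with
    -- target `s x` such that `(x • y) ↼ x = y`
    (bul : A → A → A)
    (hbul : ∀ x y, t x = t y → t (bul x y) = s x ∧ tl (bul x y) x = y)
    :
    (∀ x y, s x = s y → bul (star x y) (star y x) = x) ∧
    (∀ x y, t x = t y → star (bul x y) (bul y x) = x) := by
  constructor
  · intro x y h
    obtain ⟨ha1, ha2⟩ := hstar x y h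
    set a := star x y with hadef
    have hxa : t x = s a := ha1.symm
    -- star y x = tl x a
    have hsy : s (tl x a) = t y := by
      have := hm x a hxa
      rw [ha2] at this
      exact this.symm
    obtain ⟨hb1, hb2⟩ := hstar y x h.symm
    have key : star y x = tl x a := by
      have hinj := (lnd y).1
      have e1 : hd y (star y x) = x := hb2
      have e2 : hd y (tl x a) = x := by
        have := inv1 x a hxa
        rwa [ha2] at this
      have := hinj (a₁ := ⟨star y x, hb1⟩) (a₂ := ⟨tl x a, hsy⟩)
        (by simp only [Subtype.mk.injEq]; rw [e1, e2])
      exact congrArg Subtype.val this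
    rw [key]
    have hta : t (tl x a) = t a := ht x a hxa
    obtain ⟨hc1, hc2⟩ := hbul a (tl x a) hta.symm
    have hinj := (rnd a).1
    have := hinj (a₁ := ⟨bul a (tl x a), hc1⟩) (a₂ := ⟨x, hxa⟩)
      (by simp only [Subtype.mk.injEq]; rw [hc2])
    exact congrArg Subtype.val this
  · intro x y h
    obtain ⟨ha1, ha2⟩ := hbul x y h
    set b := bul x y with hbdef
    have hbx : t b = s x := ha1
    -- bul y x = hd b x
    have htc : t (hd b x) = s y := by
      have := hm b x hbx
      rw [ha2] at this
      exact this
    obtain ⟨hb1, hb2⟩ := hbul y x h.symm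
    have key : bul y x = hd b x := by
      have hinj := (rnd y).1
      have e1 : tl (bul y x) y = x := hb2
      have e2 : tl (hd b x) y = x := by
        have := inv2 b x hbx
        rwa [ha2] at this
      have := hinj (a₁ := ⟨bul y x, hb1⟩) (a₂ := ⟨hd b x, htc⟩)
        (by simp only [Subtype.mk.injEq]; rw [e1, e2])
      exact congrArg Subtype.val this
    rw [key]
    have hsc : s (hd b x) = s b := hs b x hbx
    obtain ⟨hc1, hc2⟩ := hstar b (hd b x) hsc.symm
    have hinj := (lnd b).1
    have := hinj (a₁ := ⟨star b (hd b x), hc1⟩) (a₂ := ⟨x, hbx.symm⟩)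
      (by simp only [Subtype.mk.injEq]; rw [hc2])
    exact congrArg Subtype.val this
end

section
/- Lemma (completion of a weak RC-system): Let (Q, ⋆) be a left-non-degenerate weak RC-system in which x ⋆ y is defined whenever s(x) = s(y), and let (Q̂, ⋆̂) be its completion. Then (Q̂, ⋆̂) is a unital weak RC-system whose unit family is the family of inserted loops {ε_λ}: (a) s(x ⋆̂ y) = t(x) and t(x ⋆̂ y) = t(y ⋆̂ x) for all x, y ∈ Q̂ with s(x) = s(y); (b) the RC-law (x ⋆̂ y) ⋆̂ (x ⋆̂ z) = (y ⋆̂ x) ⋆̂ (y ⋆̂ z) holds for all x, y, z ∈ Q̂ with a common source; (c) x ⋆̂ ε_{s(x)} = ε_{t(x)}, ε_{s(x)} ⋆̂ x = x, and x ⋆̂ x = ε_{t(x)} for all x ∈ Q̂; (d) unitality: if x, y ∈ Q̂ satisfy s(x) = s(y), t(x) = t(y) = μ, x ⋆̂ y = ε_μ and y ⋆̂ x = ε_μ, then x = y. -/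
/-!
Lemma (completion of a weak RC-system): the completion `(Q̂, ⋆̂)` of a
left-non-degenerate weak RC-system `(Q, ⋆)` (with `⋆` defined on all same-source
pairs) is a unital weak RC-system, whose unit family is the family of inserted
loops `ε_λ`.

The quiver `Q` is modelled as a type `A` of arrows with source and target maps
`s, t : A → Λ`; the completion has arrows `A ⊕ Λ`, where `Sum.inr λ` is the
inserted loop `ε_λ` at the vertex `λ`.
-/

/-- Source map of the completion. -/
def hatS {Λ A : Type*} (s : A → Λ) : A ⊕ Λ → Λ
  | Sum.inl x => s x
  | Sum.inr l => l

/-- Target map of the completion. -/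
def hatT {Λ A : Type*} (t : A → Λ) : A ⊕ Λ → Λ
  | Sum.inl x => t x
  | Sum.inr l => l

/-- The operation `⋆̂` of the completion. -/
def hatStar {Λ A : Type*} [DecidableEq A] (t : A → Λ) (star : A → A → A) :
    A ⊕ Λ → A ⊕ Λ → A ⊕ Λ
  | Sum.inl x, Sum.inl y => if x = y then Sum.inr (t x) else Sum.inl (star x y)
  | Sum.inl x, Sum.inr _ => Sum.inr (t x)
  | Sum.inr _, Sum.inl y => Sum.inl y
  | Sum.inr l, Sum.inr _ => Sum.inr l

theorem completion_is_unital_weak_RC_system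
    {Λ A : Type*} [DecidableEq A] (s t : A → Λ) (star : A → A → A)
    -- `(Q, ⋆)` is a weak RC-system, with `x ⋆ y` defined whenever `s x = s y`
    (hss : ∀ x y, s x = s y → s (star x y) = t x)
    (hst : ∀ x y, s x = s y → t (star x y) = t (star y x))
    (rc : ∀ x y z, s x = s y → s x = s z →
      star (star x y) (star x z) = star (star y x) (star y z))
    -- left-non-degeneracy
    (lnd : ∀ x : A, Function.Bijective fun y : {y : A // s y = s x} =>
      (⟨star x y.1, hss x y.1 y.2.symm⟩ : {z : A // s z = t x})) :
    -- (a) `(Q̂, ⋆̂)` has compatible sources and targets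
    (∀ x y : A ⊕ Λ, hatS s x = hatS s y →
      hatS s (hatStar t star x y) = hatT t x ∧
      hatT t (hatStar t star x y) = hatT t (hatStar t star y x)) ∧
    -- (b) the RC-law holds in the completion
    (∀ x y z : A ⊕ Λ, hatS s x = hatS s y → hatS s x = hatS s z →
      hatStar t star (hatStar t star x y) (hatStar t star x z) =
        hatStar t star (hatStar t star y x) (hatStar t star y z)) ∧
    -- (c) the inserted loops form a unit family
    (∀ x : A ⊕ Λ,
      hatStar t star x (Sum.inr (hatS s x)) = Sum.inr (hatT t x) ∧
      hatStar t star (Sum.inr (hatS s x)) x = x ∧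
      hatStar t star x x = Sum.inr (hatT t x)) ∧
    -- (d) unitality
    (∀ x y : A ⊕ Λ, hatS s x = hatS s y → hatT t x = hatT t y →
      hatStar t star x y = Sum.inr (hatT t x) →
      hatStar t star y x = Sum.inr (hatT t x) → x = y) := by
  have inj : ∀ x a b : A, s a = s x → s b = s x → star x a = star x b → a = b := by
    intro x a b ha hb h
    have := (lnd x).1 (a₁ := ⟨a, ha⟩) (a₂ := ⟨b, hb⟩) (Subtype.ext h)
    exact congrArg Subtype.val this
  refine ⟨?_, ?_, ?_, ?_⟩
  · rintro (x | l) (y | m) h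
    · by_cases hxy : x = y
      · subst hxy; simp [hatStar, hatS, hatT]
      · simp [hatStar, hatS, hatT, hxy, Ne.symm hxy, hss x y h, hst x y h]
    · simp [hatStar, hatS, hatT]
    · simp only [hatS, hatT] at h ⊢
      simp [hatStar, hatS, hatT, h.symm]
    · simp only [hatS, hatT] at h ⊢
      simp [hatStar, hatT, h]
  · rintro (x | l) (y | m) (z | n) hxy hxz <;>
      simp only [hatS] at hxy hxz
    · by_cases h1 : x = y
      · subst h1
        by_cases h2 : x = z
        · subst h2; simp [hatStar]
        · simp [hatStar, h2]
      · by_cases h2 : x = z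
        · subst h2
          simp only [hatStar, if_neg h1, if_pos rfl, if_neg (Ne.symm h1)]
          simp [hatStar, hst x y hxy]
        · by_cases h3 : y = z
          · subst h3
            simp only [hatStar, if_neg h1, if_neg (Ne.symm h1), if_pos rfl]
            simp [hatStar, hss y x hxy.symm, hst x y hxy]
          · have ne1 : star x y ≠ star x z := fun h =>
              h3 (inj x y z hxy.symm hxz.symm h)
            have ne2 : star y x ≠ star y z := fun h =>
              h2 (inj y x z hxy (hxz.symm.trans hxy) h)
            simp only [hatStar, if_neg h1, if_neg h2, if_neg (Ne.symm h1),
              if_neg h3, if_neg ne1, if_neg ne2]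
            exact congrArg Sum.inl (rc x y z hxy hxz)
    · by_cases h1 : x = y
      · subst h1; simp [hatStar]
      · simp [hatStar, h1, Ne.symm h1, hst x y hxy]
    · by_cases h2 : x = z
      · subst h2; simp [hatStar]
      · simp [hatStar, h2]
    · simp [hatStar]
    · by_cases h3 : y = z
      · subst h3; simp [hatStar]
      · simp [hatStar, h3]
    · simp [hatStar]
    · simp [hatStar]
    · simp only [hatStar]; exact congrArg Sum.inr hxy
  · rintro (x | l)
    · refine ⟨rfl, rfl, ?_⟩
      simp [hatStar, hatS, hatT]
    · exact ⟨rfl, rfl, rfl⟩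
  · rintro (x | l) (y | m) hs ht hxy hyx
    · by_cases h : x = y
      · exact congrArg Sum.inl h
      · simp [hatStar, h] at hxy
    · simp [hatStar] at hyx
    · simp [hatStar] at hxy
    · simp only [hatS] at hs; exact congrArg Sum.inr hs
end

section
/- Proposition (left-non-degenerate weak RC-systems yield Yang–Baxter maps): Let (𝒜, ⋆') be a left-non-degenerate weak RC-system in which x ⋆' y is defined whenever s(x) = s(y): s(x ⋆' y) = t(x), t(x ⋆' y) = t(y ⋆' x), the RC-law (x ⋆' y) ⋆' (x ⋆' z) = (y ⋆' x) ⋆' (y ⋆' z) holds for all arrows x, y, z with a common source, and each map y ↦ x ⋆' y is a bijection from arrows with source s(x) to arrows with source t(x). For each composable pair (a, b) define a ⇀ b as the unique arrow c with a ⋆' c = b, and a ↼ b := (a ⇀ b) ⋆' a. Then σ(a, b) := (a ⇀ b, a ↼ b) is a quiver-theoretic Yang–Baxter map on 𝒜, i.e., for every composable triple a|b|c: (YB1) (a⇀b)⇀((a↼b)⇀c) = a⇀(b⇀c); (YB2) (a⇀b)↼((a↼b)⇀c) = (a↼(b⇀c))⇀(b↼c); (YB3) (a↼b)↼c = (a↼(b⇀c))↼(b↼c).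 -/
/-!
Proposition (left-non-degenerate weak RC-systems yield Yang–Baxter maps):
let `(A, s, t, ⋆')` be a left-non-degenerate weak RC-system with `x ⋆' y` defined
whenever `s x = s y`. For a composable pair `(a, b)` (i.e. `t a = s b`) let
`a ⇀ b` be the unique arrow `c` with `s c = s a` and `a ⋆' c = b`, and let
`a ↼ b := (a ⇀ b) ⋆' a`. Then `σ(a, b) = (a ⇀ b, a ↼ b)` is a quiver-theoretic
Yang–Baxter map on `A`: it is a morphism of quivers and satisfies (YB1)–(YB3).
-/

theorem weak_RC_system_gives_YBM
    {Λ A : Type*} (s t : A → Λ) (star : A → A → A)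
    -- `(A, ⋆')` is a weak RC-system with `⋆'` defined on all same-source pairs
    (hss : ∀ x y, s x = s y → s (star x y) = t x)
    (hst : ∀ x y, s x = s y → t (star x y) = t (star y x))
    (rc : ∀ x y z, s x = s y → s x = s z →
      star (star x y) (star x z) = star (star y x) (star y z))
    -- left-non-degeneracy: each `y ↦ x ⋆' y` is a bijection from arrows with
    -- source `s x` to arrows with source `t x`
    (lnd : ∀ x : A, Function.Bijective fun y : {y : A // s y = s x} =>
      (⟨star x y.1, hss x y.1 y.2.symm⟩ : {z : A // s z = t x}))
    -- the map `⇀`: for `t a = s b`, `a ⇀ b` is the unique arrow `c`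
    -- with `s c = s a` and `a ⋆' c = b`
    (hd : A → A → A)
    (hhd : ∀ a b, t a = s b → s (hd a b) = s a ∧ star a (hd a b) = b) :
    -- σ is a morphism of quivers …
    (∀ a b, t a = s b →
      s (hd a b) = s a ∧
      t (hd a b) = s (star (hd a b) a) ∧
      t (star (hd a b) a) = t b) ∧
    -- … satisfying (YB1), (YB2), (YB3), where `a ↼ b = (a ⇀ b) ⋆' a`
    (∀ a b c, t a = s b → t b = s c →
      hd (hd a b) (hd (star (hd a b) a) c) = hd a (hd b c)) ∧
    (∀ a b c, t a = s b → t b = s c →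
      star (hd (hd a b) (hd (star (hd a b) a) c)) (hd a b) =
        hd (star (hd a (hd b c)) a) (star (hd b c) b)) ∧
    (∀ a b c, t a = s b → t b = s c →
      star (hd (star (hd a b) a) c) (star (hd a b) a) =
        star (hd (star (hd a (hd b c)) a) (star (hd b c) b)) (star (hd a (hd b c)) a)) := by
  have inj : ∀ x y z : A, s y = s x → s z = s x → star x y = star x z → y = z := by
    intro x y z hy hz h
    have h2 := (lnd x).1 (a₁ := ⟨y, hy⟩) (a₂ := ⟨z, hz⟩) (Subtype.ext h)
    exact congrArg Subtype.val h2
  have main : ∀ a b c, t a = s b → t b = s c →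
      hd (hd a b) (hd (star (hd a b) a) c) = hd a (hd b c) ∧
      star (hd (hd a b) (hd (star (hd a b) a) c)) (hd a b) =
        hd (star (hd a (hd b c)) a) (star (hd b c) b) ∧
      star (hd (star (hd a b) a) c) (star (hd a b) a) =
        star (hd (star (hd a (hd b c)) a) (star (hd b c) b)) (star (hd a (hd b c)) a) := by
    intro a b c hab hbc
    set u := hd a b with hu
    obtain ⟨hus, hua⟩ := hhd a b hab
    obtain ⟨hbcs, hbcc⟩ := hhd b c hbc
    set w := hd a (hd b c) with hw
    have hwcomp : t a = s (hd b c) := hab.trans hbcs.symm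
    obtain ⟨hws, hwa⟩ := hhd a (hd b c) hwcomp
    have hsua : s (star u a) = t u := hss u a hus
    have htua : t (star u a) = s c := (hst u a hus).trans (by rw [hua]; exact hbc)
    set v := hd (star u a) c with hv
    obtain ⟨hvs, hvc⟩ := hhd (star u a) c htua
    have hsw_u : s w = s u := hws.trans hus.symm
    have hsu_w : s u = s w := hsw_u.symm
    -- star u w = v
    have huw : star u w = v := by
      refine inj (star u a) _ _ ((hss u w hsu_w).trans hsua.symm) hvs ?_
      have e1 : star (star u a) (star u w) = star (star a u) (star a w) :=
        rc u a w hus hsu_w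
      rw [e1, hua, hwa, hbcc, hvc]
    -- YB1
    have htuv : t u = s v := (hvs.trans hsua).symm
    obtain ⟨huvs, huvc⟩ := hhd u v htuv
    have yb1 : hd u v = w := inj u (hd u v) w huvs hsw_u (huvc.trans huw.symm)
    -- YB2
    have htpq : t (star w a) = s (star (hd b c) b) := by
      rw [hst w a hws, hwa, hss (hd b c) b hbcs]
    obtain ⟨hpqs, hpqc⟩ := hhd (star w a) (star (hd b c) b) htpq
    have hswu : s (star w u) = s (star w a) := (hss w u hsw_u).trans (hss w a hws).symm
    have yb2 : hd (star w a) (star (hd b c) b) = star w u := by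
      refine inj (star w a) _ _ hpqs hswu (hpqc.trans ?_)
      have e2 : star (star w a) (star w u) = star (star a w) (star a u) :=
        rc w a u hws hsw_u
      rw [e2, hwa, hua]
    refine ⟨yb1, by rw [yb1, yb2], ?_⟩
    rw [yb2]
    have e3 : star (star w u) (star w a) = star (star u w) (star u a) :=
      rc w u a hsw_u hws
    rw [e3, huw]
  refine ⟨?_, fun a b c hab hbc => (main a b c hab hbc).1,
    fun a b c hab hbc => (main a b c hab hbc).2.1,
    fun a b c hab hbc => (main a b c hab hbc).2.2⟩
  intro a b hab
  obtain ⟨h1, h2⟩ := hhd a b hab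
  exact ⟨h1, (hss (hd a b) a h1).symm, (hst (hd a b) a h1).trans (congrArg t h2)⟩
end

section
/- Theorem (left-cancellativity of the structure category): Let σ be an involutive left-non-degenerate quiver-theoretic Yang–Baxter map on a quiver 𝒜, and let C(σ) be its structure category. Then C(σ) is left-cancellative: for all morphisms f, x, y of C(σ) for which the compositions are defined, f ≫ x = f ≫ y implies x = y. -/
/-!
Theorem (embedding of the quiver into the structure category):
For an involutive left-non-degenerate quiver-theoretic Yang–Baxter map `σ` on a quiver `𝒜`,
the canonical map `j : 𝒜 → C(σ)` into the structure category is injective.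
-/

open CategoryTheory

universe u v

/-- A quiver over `Λ` with arrows `A`: source and target maps. -/
structure QuiverData (Λ : Type u) (A : Type v) where
  src : A → Λ
  tgt : A → Λ

namespace QuiverData

variable {Λ : Type u} {A : Type v}

/-- The type of vertices, carrying the quiver structure whose arrows from `a` to `b`
are the elements `x : A` with `src x = a` and `tgt x = b`. -/
def V (_Q : QuiverData Λ A) : Type u := Λ

instance (Q : QuiverData Λ A) : Quiver Q.V where
  Hom a b := {x : A // Q.src x = a ∧ Q.tgt x = b}

def vert (Q : QuiverData Λ A) (l : Λ) : Q.V := l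

/-- The arrow of the quiver `Q.V` corresponding to `x : A`. -/
def arr (Q : QuiverData Λ A) (x : A) {a b : Λ}
    (ha : Q.src x = a) (hb : Q.tgt x = b) : Q.vert a ⟶ Q.vert b :=
  ⟨x, ha, hb⟩

/-- The length-two path `x|y` in the path category. -/
def path2 (Q : QuiverData Λ A) {a m b : Λ} (x y : A)
    (hx : Q.src x = a) (hx' : Q.tgt x = m) (hy : Q.src y = m) (hy' : Q.tgt y = b) :
    (Paths.of Q.V).obj (Q.vert a) ⟶ (Paths.of Q.V).obj (Q.vert b) :=
  (Paths.of Q.V).map (Q.arr x hx hx') ≫ (Paths.of Q.V).map (Q.arr y hy hy')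

/-- The relation `x|y ∼ (x ⇀ y)|(x ↼ y)` on the path category, where `hd = ⇀`, `tl = ↼`. -/
inductive ybRel (Q : QuiverData Λ A) (hd tl : A → A → A) :
    HomRel (Paths Q.V)
  | mk (x y : A) (hxy : Q.tgt x = Q.src y)
      (h1 : Q.src (hd x y) = Q.src x)
      (h2 : Q.tgt (hd x y) = Q.src (tl x y))
      (h3 : Q.tgt (tl x y) = Q.tgt y) :
      ybRel Q hd tl (Q.path2 x y rfl rfl hxy.symm rfl)
        (Q.path2 (hd x y) (tl x y) h1 rfl h2.symm h3)

/-- The structure category `C(σ)`: the quotient of the path category by the congruence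
generated by `x|y ∼ (x ⇀ y)|(x ↼ y)`. -/
abbrev SC (Q : QuiverData Λ A) (hd tl : A → A → A) :=
  CategoryTheory.Quotient (Q.ybRel hd tl)

/-- The canonical map `j` from arrows of the quiver to morphisms of the structure category. -/
def jmap (Q : QuiverData Λ A) (hd tl : A → A → A) (x : A) {a b : Λ}
    (ha : Q.src x = a) (hb : Q.tgt x = b) :
    (Quotient.functor (Q.ybRel hd tl)).obj ((Paths.of Q.V).obj (Q.vert a)) ⟶
      (Quotient.functor (Q.ybRel hd tl)).obj ((Paths.of Q.V).obj (Q.vert b)) :=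
  (Quotient.functor (Q.ybRel hd tl)).map ((Paths.of Q.V).map (Q.arr x ha hb))

end QuiverData

/-!
An arrow `x : a ⟶ b` acts on finite multisets of arrows by the affine map
`m ↦ {x} + λₓ m`, where `λₓ y = x ⇀ y`, sending multisets of arrows with source `b` to multisets of
arrows with source `a`; this is the quiver version of the embedding of the structure monoid of an
involutive solution into `ℕ^(X) ⋊ Sym X`. Write `f • m` for the action of a path `f`.
Involutivity and (YB1) make both sides of a defining relation `x|y ∼ (x ⇀ y)|(x ↼ y)` act alike,
so this is a contravariant functor on `C(σ)`, and left non-degeneracy makes every action injective.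

The multiset `f • 0` determines `f`: the defining relations move any arrow of `f • 0` to the front
of a path representing `f`, and cancelling that first arrow shortens the path. So
`f ≫ x = f ≫ y` gives `f • (x • 0) = f • (y • 0)`, hence `x • 0 = y • 0` and `x = y`.
-/

namespace QuiverData

open Opposite

variable {Λ : Type u} {A : Type v} {Q : QuiverData Λ A} {hd tl : A → A → A}

variable (Q) in
abbrev OutArr (X : Q.V) : Type v := {x : A // Q.src x = X}

def outArrow {X : Q.V} (w : Q.OutArr X) : X ⟶ Q.vert (Q.tgt w.1) := ⟨w.1, w.2, rfl⟩

theorem functor_map_path_comp {X Y Z : Q.V} (p : Quiver.Path X Y) (q : Quiver.Path Y Z) :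
    (Quotient.functor (Q.ybRel hd tl)).map (p.comp q) =
      (Quotient.functor (Q.ybRel hd tl)).map p ≫ (Quotient.functor (Q.ybRel hd tl)).map q :=
  (Quotient.functor (Q.ybRel hd tl)).map_comp (X := X) p q

section

variable (hs : ∀ x y, Q.tgt x = Q.src y → Q.src (hd x y) = Q.src x)

def leftMul {X Y : Q.V} (e : X ⟶ Y) (w : Q.OutArr Y) : Q.OutArr X :=
  ⟨hd e.1 w.1, (hs _ _ (e.2.2.trans w.2.symm)).trans e.2.1⟩

theorem leftMul_injective
    (lnd : ∀ x : A, Function.Bijective fun y : {y : A // Q.src y = Q.tgt x} =>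
      (⟨hd x y.1, hs x y.1 y.2.symm⟩ : {z : A // Q.src z = Q.src x}))
    {X Y : Q.V} (e : X ⟶ Y) : Function.Injective (leftMul hs e) := by
  intro w w' h
  have := (lnd e.1).1 (a₁ := ⟨w.1, w.2.trans e.2.2.symm⟩) (a₂ := ⟨w'.1, w'.2.trans e.2.2.symm⟩)
    (Subtype.ext (congrArg Subtype.val h : hd e.1 w.1 = hd e.1 w'.1))
  exact Subtype.ext (Subtype.mk.inj this)

def affineStep {X Y : Q.V} (e : X ⟶ Y) (m : Multiset (Q.OutArr Y)) : Multiset (Q.OutArr X) :=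
  ⟨e.1, e.2.1⟩ ::ₘ m.map (leftMul hs e)

theorem card_affineStep {X Y : Q.V} (e : X ⟶ Y) (m : Multiset (Q.OutArr Y)) :
    Multiset.card (affineStep hs e m) = Multiset.card m + 1 := by
  rw [affineStep, Multiset.card_cons, Multiset.card_map]

theorem affineStep_injective {X Y : Q.V} {e : X ⟶ Y} (he : Function.Injective (leftMul hs e)) :
    Function.Injective (affineStep hs e) := fun _ _ h =>
  Multiset.map_injective he (Multiset.cons_inj_right _ |>.1 h)

theorem affineStep_affineStep
    (inv1 : ∀ x y, Q.tgt x = Q.src y → hd (hd x y) (tl x y) = x)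
    (yb1 : ∀ x y z, Q.tgt x = Q.src y → Q.tgt y = Q.src z →
      hd (hd x y) (hd (tl x y) z) = hd x (hd y z))
    {X M M' Y : Q.V} (e : X ⟶ M) (f : M ⟶ Y) (e' : X ⟶ M') (f' : M' ⟶ Y)
    (he' : e'.1 = hd e.1 f.1) (hf' : f'.1 = tl e.1 f.1) (m : Multiset (Q.OutArr Y)) :
    affineStep hs e (affineStep hs f m) = affineStep hs e' (affineStep hs f' m) := by
  have hef : Q.tgt e.1 = Q.src f.1 := e.2.2.trans f.2.1.symm
  have head : leftMul hs e ⟨f.1, f.2.1⟩ = ⟨e'.1, e'.2.1⟩ := Subtype.ext he'.symm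
  have head' : leftMul hs e' ⟨f'.1, f'.2.1⟩ = ⟨e.1, e.2.1⟩ :=
    Subtype.ext (by simp only [leftMul, he', hf', inv1 _ _ hef])
  have tail : ∀ w, leftMul hs e (leftMul hs f w) = leftMul hs e' (leftMul hs f' w) := fun w =>
    Subtype.ext (by simp only [leftMul, he', hf', yb1 _ _ _ hef (f.2.2.trans w.2.symm)])
  simp only [affineStep, Multiset.map_cons, Multiset.map_map, head, head', Function.comp_def,
    tail]
  exact Multiset.cons_swap _ _ _

def affinePrefunctor : Q.V ⥤q (Type v)ᵒᵖ where
  obj X := op (Multiset (Q.OutArr X))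
  map e := (TypeCat.ofHom (affineStep hs e)).op

def affineAct {X Y : Q.V} (p : Quiver.Path X Y) : Multiset (Q.OutArr Y) → Multiset (Q.OutArr X) :=
  ((Paths.lift (affinePrefunctor hs)).map p).unop

theorem affineAct_cons {X Y Z : Q.V} (p : Quiver.Path X Y) (e : Y ⟶ Z)
    (m : Multiset (Q.OutArr Z)) : affineAct hs (p.cons e) m = affineAct hs p (affineStep hs e m) :=
  rfl

theorem affineAct_comp {X Y Z : Q.V} (p : Quiver.Path X Y) (q : Quiver.Path Y Z)
    (m : Multiset (Q.OutArr Z)) :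
    affineAct hs (p.comp q) m = affineAct hs p (affineAct hs q m) :=
  congrArg (fun f => f.unop m) ((Paths.lift (affinePrefunctor hs)).map_comp (X := X) p q)

theorem affineAct_toPath_comp {X Y Z : Q.V} (e : X ⟶ Y) (p : Quiver.Path Y Z)
    (m : Multiset (Q.OutArr Z)) :
    affineAct hs (e.toPath.comp p) m = affineStep hs e (affineAct hs p m) :=
  affineAct_comp hs _ _ m

theorem card_affineAct {X Y : Q.V} (p : Quiver.Path X Y) (m : Multiset (Q.OutArr Y)) :
    Multiset.card (affineAct hs p m) = Multiset.card m + p.length := by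
  induction p with
  | nil => rfl
  | cons p e ih =>
    rw [affineAct_cons, ih, card_affineStep, Quiver.Path.length_cons, Nat.add_right_comm,
      Nat.add_assoc]

theorem affineAct_injective (hinj : ∀ {X Y : Q.V} (e : X ⟶ Y), Function.Injective (leftMul hs e))
    {X Y : Q.V} (p : Quiver.Path X Y) : Function.Injective (affineAct hs p) := by
  induction p with
  | nil => exact Function.injective_id
  | cons p e ih => exact fun m m' h => affineStep_injective hs (hinj e) (ih h)

variable (tl) in
def affineRep (inv1 : ∀ x y, Q.tgt x = Q.src y → hd (hd x y) (tl x y) = x)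
    (yb1 : ∀ x y z, Q.tgt x = Q.src y → Q.tgt y = Q.src z →
      hd (hd x y) (hd (tl x y) z) = hd x (hd y z)) :
    Q.SC hd tl ⥤ (Type v)ᵒᵖ :=
  CategoryTheory.Quotient.lift _ (Paths.lift (affinePrefunctor hs)) <| by
    rintro _ _ _ _ ⟨⟩
    refine Quiver.Hom.unop_inj (ConcreteCategory.hom_ext _ _ fun m => ?_)
    exact affineStep_affineStep hs inv1 yb1 _ _ _ _ rfl rfl m

theorem affineAct_eq_of_functor_map_eq
    (inv1 : ∀ x y, Q.tgt x = Q.src y → hd (hd x y) (tl x y) = x)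
    (yb1 : ∀ x y z, Q.tgt x = Q.src y → Q.tgt y = Q.src z →
      hd (hd x y) (hd (tl x y) z) = hd x (hd y z))
    {X Y : Q.V} {p q : Quiver.Path X Y}
    (h : (Quotient.functor (Q.ybRel hd tl)).map p = (Quotient.functor (Q.ybRel hd tl)).map q) :
    affineAct hs p = affineAct hs q := by
  funext m
  have := congrArg (affineRep tl hs inv1 yb1).map h
  exact congrArg (fun f => f.unop m) this

theorem functor_map_toPath_comp_outArrow
    (hm : ∀ x y, Q.tgt x = Q.src y → Q.tgt (hd x y) = Q.src (tl x y))
    (ht : ∀ x y, Q.tgt x = Q.src y → Q.tgt (tl x y) = Q.tgt y)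
    {X M : Q.V} (e : X ⟶ M) (w : Q.OutArr M) :
    (Quotient.functor (Q.ybRel hd tl)).map (e.toPath.comp (outArrow w).toPath) =
      (Quotient.functor (Q.ybRel hd tl)).map ((outArrow (leftMul hs e w)).toPath.comp
        (Q.arr (tl e.1 w.1) (hm _ _ (e.2.2.trans w.2.symm)).symm
          (ht _ _ (e.2.2.trans w.2.symm))).toPath) := by
  obtain ⟨x, rfl, rfl⟩ := e
  obtain ⟨y, hy⟩ := w
  exact CategoryTheory.Quotient.sound _
    (ybRel.mk x y hy.symm (hs x y hy.symm) (hm x y hy.symm) (ht x y hy.symm))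

theorem exists_functor_map_eq_outArrow_comp
    (hm : ∀ x y, Q.tgt x = Q.src y → Q.tgt (hd x y) = Q.src (tl x y))
    (ht : ∀ x y, Q.tgt x = Q.src y → Q.tgt (tl x y) = Q.tgt y)
    {X Y : Q.V} (p : Quiver.Path X Y) (w : Q.OutArr X) (hw : w ∈ affineAct hs p 0) :
    ∃ q : Quiver.Path (Q.vert (Q.tgt w.1)) Y, (Quotient.functor (Q.ybRel hd tl)).map p =
      (Quotient.functor (Q.ybRel hd tl)).map ((outArrow w).toPath.comp q) := by
  obtain ⟨n, hn⟩ : ∃ n, p.length = n := ⟨_, rfl⟩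
  induction n generalizing X with
  | zero =>
    have : affineAct hs p 0 = 0 := Multiset.card_eq_zero.1 (by rw [card_affineAct, hn]; rfl)
    exact absurd (this ▸ hw) (Multiset.notMem_zero w)
  | succ n ih =>
    obtain ⟨Z, e, p', hp', rfl⟩ := p.eq_toPath_comp_of_length_eq_succ hn
    rw [affineAct_toPath_comp] at hw
    rcases Multiset.mem_cons.1 hw with rfl | hw
    · obtain ⟨x, hx, rfl⟩ := e
      exact ⟨p', rfl⟩
    obtain ⟨w', hw', rfl⟩ := Multiset.mem_map.1 hw
    obtain ⟨q, hq⟩ := ih p' w' hw' hp'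
    have hew : Q.tgt e.1 = Q.src w'.1 := e.2.2.trans w'.2.symm
    refine ⟨(Q.arr (tl e.1 w'.1) (hm _ _ hew).symm (ht _ _ hew)).toPath.comp q, ?_⟩
    rw [functor_map_path_comp, hq, ← functor_map_path_comp, ← Quiver.Path.comp_assoc,
      functor_map_path_comp, functor_map_toPath_comp_outArrow hs hm ht, ← functor_map_path_comp]
    exact congrArg _ (Quiver.Path.comp_assoc _ _ _)

theorem functor_map_eq_of_affineAct_zero_eq
    (hm : ∀ x y, Q.tgt x = Q.src y → Q.tgt (hd x y) = Q.src (tl x y))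
    (ht : ∀ x y, Q.tgt x = Q.src y → Q.tgt (tl x y) = Q.tgt y)
    (yb1 : ∀ x y z, Q.tgt x = Q.src y → Q.tgt y = Q.src z →
      hd (hd x y) (hd (tl x y) z) = hd x (hd y z))
    (inv1 : ∀ x y, Q.tgt x = Q.src y → hd (hd x y) (tl x y) = x)
    (hinj : ∀ {X Y : Q.V} (e : X ⟶ Y), Function.Injective (leftMul hs e))
    {X Y : Q.V} (p q : Quiver.Path X Y) (h : affineAct hs p 0 = affineAct hs q 0) :
    (Quotient.functor (Q.ybRel hd tl)).map p = (Quotient.functor (Q.ybRel hd tl)).map q := by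
  obtain ⟨n, hn⟩ : ∃ n, p.length = n := ⟨_, rfl⟩
  induction n generalizing X with
  | zero =>
    have hq : q.length = 0 := by simpa [card_affineAct, hn] using congrArg Multiset.card h.symm
    obtain rfl := Quiver.Path.eq_of_length_zero p hn
    rw [Quiver.Path.eq_nil_of_length_zero p hn, Quiver.Path.eq_nil_of_length_zero q hq]
  | succ n ih =>
    obtain ⟨w, hw⟩ : ∃ w, w ∈ affineAct hs p 0 :=
      Multiset.card_pos_iff_exists_mem.1 (by rw [card_affineAct, hn]; omega)
    obtain ⟨p', hp'⟩ := exists_functor_map_eq_outArrow_comp hs hm ht p w hw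
    obtain ⟨q', hq'⟩ := exists_functor_map_eq_outArrow_comp hs hm ht q w (h ▸ hw)
    have hp'0 : affineAct hs p 0 = affineStep hs (outArrow w) (affineAct hs p' 0) := by
      rw [affineAct_eq_of_functor_map_eq hs inv1 yb1 hp', affineAct_toPath_comp]
    have hq'0 : affineAct hs q 0 = affineStep hs (outArrow w) (affineAct hs q' 0) := by
      rw [affineAct_eq_of_functor_map_eq hs inv1 yb1 hq', affineAct_toPath_comp]
    have hpq' : affineAct hs p' 0 = affineAct hs q' 0 :=
      affineStep_injective hs (hinj _) (hp'0.symm.trans (h.trans hq'0))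
    have hlen' : p'.length = n := by
      have := congrArg Multiset.card hp'0
      rw [card_affineAct, card_affineStep, card_affineAct, hn] at this
      omega
    rw [hp', hq', functor_map_path_comp, functor_map_path_comp, ih p' q' hpq' hlen']

end

end QuiverData

theorem structureCategory_leftCancellative_general
    {Λ : Type u} {A : Type v} (Q : QuiverData Λ A) (hd tl : A → A → A)
    -- σ is a morphism of quivers
    (hs : ∀ x y, Q.tgt x = Q.src y → Q.src (hd x y) = Q.src x)
    (hm : ∀ x y, Q.tgt x = Q.src y → Q.tgt (hd x y) = Q.src (tl x y))
    (ht : ∀ x y, Q.tgt x = Q.src y → Q.tgt (tl x y) = Q.tgt y)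
    -- the Yang–Baxter equation in components
    (yb1 : ∀ x y z, Q.tgt x = Q.src y → Q.tgt y = Q.src z →
      hd (hd x y) (hd (tl x y) z) = hd x (hd y z))
    -- involutivity
    (inv1 : ∀ x y, Q.tgt x = Q.src y → hd (hd x y) (tl x y) = x)
    -- left-non-degeneracy
    (lnd : ∀ x : A, Function.Bijective fun y : {y : A // Q.src y = Q.tgt x} =>
      (⟨hd x y.1, hs x y.1 y.2.symm⟩ : {z : A // Q.src z = Q.src x}))
    :
    -- conclusion: the structure category is left-cancellative
    ∀ (a b c : Q.SC hd tl) (f : a ⟶ b) (x y : b ⟶ c), f ≫ x = f ≫ y → x = y := by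
  intro a b c f x y h
  obtain ⟨p, rfl⟩ := (Quotient.functor (Q.ybRel hd tl)).map_surjective (X := a.as) (Y := b.as) f
  obtain ⟨px, rfl⟩ := (Quotient.functor (Q.ybRel hd tl)).map_surjective (X := b.as) (Y := c.as) x
  obtain ⟨py, rfl⟩ := (Quotient.functor (Q.ybRel hd tl)).map_surjective (X := b.as) (Y := c.as) y
  rw [← Functor.map_comp, ← Functor.map_comp] at h
  have hinj : ∀ {X Y : Q.V} (e : X ⟶ Y), Function.Injective (QuiverData.leftMul hs e) :=
    QuiverData.leftMul_injective hs lnd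
  have hact : QuiverData.affineAct hs p (QuiverData.affineAct hs px 0) =
      QuiverData.affineAct hs p (QuiverData.affineAct hs py 0) :=
    (QuiverData.affineAct_comp hs p px 0).symm.trans
      ((congrFun (QuiverData.affineAct_eq_of_functor_map_eq hs inv1 yb1 h) 0).trans
        (QuiverData.affineAct_comp hs p py 0))
  exact QuiverData.functor_map_eq_of_affineAct_zero_eq hs hm ht yb1 inv1 hinj px py
    (QuiverData.affineAct_injective hs hinj p hact)

theorem structureCategory_leftCancellative
    {Λ : Type u} {A : Type v} (Q : QuiverData Λ A) (hd tl : A → A → A)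
    -- σ is a morphism of quivers
    (hs : ∀ x y, Q.tgt x = Q.src y → Q.src (hd x y) = Q.src x)
    (hm : ∀ x y, Q.tgt x = Q.src y → Q.tgt (hd x y) = Q.src (tl x y))
    (ht : ∀ x y, Q.tgt x = Q.src y → Q.tgt (tl x y) = Q.tgt y)
    -- the Yang–Baxter equation in components
    (yb1 : ∀ x y z, Q.tgt x = Q.src y → Q.tgt y = Q.src z →
      hd (hd x y) (hd (tl x y) z) = hd x (hd y z))
    (yb2 : ∀ x y z, Q.tgt x = Q.src y → Q.tgt y = Q.src z →
      tl (hd x y) (hd (tl x y) z) = hd (tl x (hd y z)) (tl y z))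
    (yb3 : ∀ x y z, Q.tgt x = Q.src y → Q.tgt y = Q.src z →
      tl (tl x y) z = tl (tl x (hd y z)) (tl y z))
    -- involutivity
    (inv1 : ∀ x y, Q.tgt x = Q.src y → hd (hd x y) (tl x y) = x)
    (inv2 : ∀ x y, Q.tgt x = Q.src y → tl (hd x y) (tl x y) = y)
    -- left-non-degeneracy
    (lnd : ∀ x : A, Function.Bijective fun y : {y : A // Q.src y = Q.tgt x} =>
      (⟨hd x y.1, hs x y.1 y.2.symm⟩ : {z : A // Q.src z = Q.src x}))
    :
    -- conclusion: the structure category is left-cancellative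
    ∀ (a b c : Q.SC hd tl) (f : a ⟶ b) (x y : b ⟶ c), f ≫ x = f ≫ y → x = y :=
  structureCategory_leftCancellative_general Q hd tl hs hm ht yb1 inv1 lnd
end

section
/- Theorem (converse connection): Let 𝒜 be a quiver over Λ and let R be a set of relations between length-2 paths of 𝒜, each of the form a|v ∼ b|w with a, v, b, w arrows satisfying t(a) = s(v), t(b) = s(w), s(a) = s(b), t(v) = t(w). Assume: (i) every length-2 path appears in at most one relation of R (on either side); (ii) for all arrows a ≠ b with s(a) = s(b) there is exactly one relation of the form a|v ∼ b|w in R; (ii') for all arrows a ≠ b with t(a) = t(b) there is exactly one relation of the form v|a ∼ w|b in R; (iii) for every arrow a there is a unique arrow z_a with s(z_a) = t(a) such that: for every arrow v ≠ z_a with s(v) = t(a) there exist b ≠ a and w with (a|v ∼ b|w) ∈ R, and whenever (a|z_a ∼ b|w) ∈ R one has b = a and w = z_a; (iii') dually, for every arrow a there is a unique arrow z^a with t(z^a) = s(a) such that: for every v ≠ z^a with t(v) = s(a) there exist b ≠ a and w with (v|a ∼ w|b) ∈ R, and whenever (z^a|a ∼ w|b) ∈ R one has b = a and w = z^a; (v)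 the operation a ⋆ b, defined for a ≠ b with s(a) = s(b) as the unique v such that (a|v ∼ b|w) ∈ R for some w, satisfies the RC-law (a⋆b)⋆(a⋆c) = (b⋆a)⋆(b⋆c) for all pairwise distinct a, b, c with a common source. Extend ⋆ by a ⋆' b := a ⋆ b for a ≠ b and a ⋆' a := z_a. Then: each map b ↦ a ⋆' b is a bijection from arrows with source s(a) to arrows with source t(a); the assignment σ(a, b) := (a ⇀ b, a ↼ b), where a ⇀ b is the unique c with a ⋆' c = b and a ↼ b := (a ⇀ b) ⋆' a, is an involutive non-degenerate quiver-theoretic Yang–Baxter map on 𝒜; and the congruence on the path category of 𝒜 generated by R coincides with the congruence generated by the relations x|y ∼ (x⇀y)|(x↼y), so that the presented category ⟨𝒜 | R⟩⁺ is the structure category C(σ). -/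
/-!
By (ii) and (iii), the relations of `R` starting with an arrow `a` pair `a` exactly once with
every other arrow `b` of the same source, as `a | a ⋆ b ∼ b | b ⋆ a`, and `z_a` is the one
path `a | v` left over; hence `b ↦ a ⋆' b` is a bijection with inverse `a ⇀ -`. Condition
(iii') makes `a ↦ z_a` a bijection, which extends the RC-law from pairwise distinct triples
to all triples `a, b, c` with a common source. The Yang–Baxter equations, involutivity and left
non-degeneracy of `σ` are then computations with `⋆'`. Finally `σ` sends the left side of each
relation of `R` to its right side and fixes exactly the paths `x | z_x`, so the two
congruences have the same generators up to trivial ones; right non-degeneracy follows from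
the same dichotomy together with (ii').
-/

open CategoryTheory

universe u v

/-- The relation on the path category generated by a presentation `R`
consisting of quadratic relations `a|v ∼ b|w`. -/
inductive presRel {Λ : Type u} {A : Type v} (Q : QuiverData Λ A)
    (R : A × A → A × A → Prop) :
    HomRel (Paths Q.V)
  | mk (a v b w : A) (h : R (a, v) (b, w))
      (h1 : Q.tgt a = Q.src v) (h2 : Q.tgt b = Q.src w)
      (h3 : Q.src a = Q.src b) (h4 : Q.tgt v = Q.tgt w) :
      presRel Q R (Q.path2 a v rfl rfl h1.symm rfl)
        (Q.path2 b w h3.symm rfl h2.symm h4.symm)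

/-- The extension `⋆'` of the partial operation `⋆`, with `a ⋆' a := z_a`. -/
def starExt {A : Type v} [DecidableEq A] (star : A → A → A) (zmap : A → A) :
    A → A → A :=
  fun a b => if a = b then zmap a else star a b

/-- The defining property of the distinguished arrow `z_a` of condition (iii). -/
def IsZ {Λ : Type u} {A : Type v} (Q : QuiverData Λ A)
    (R : A × A → A × A → Prop) (a z : A) : Prop :=
  Q.src z = Q.tgt a ∧
    (∀ v, Q.src v = Q.tgt a → v ≠ z → ∃ b w, b ≠ a ∧ R (a, v) (b, w)) ∧
    (∀ b w, R (a, z) (b, w) → b = a ∧ w = z)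

/-- The defining property of the distinguished arrow `z^a` of condition (iii'). -/
def IsZco {Λ : Type u} {A : Type v} (Q : QuiverData Λ A)
    (R : A × A → A × A → Prop) (a z : A) : Prop :=
  Q.tgt z = Q.src a ∧
    (∀ v, Q.tgt v = Q.src a → v ≠ z → ∃ b w, b ≠ a ∧ R (v, a) (w, b)) ∧
    (∀ b w, R (z, a) (w, b) → b = a ∧ w = z)

namespace QuiverData

variable {Λ : Type u} {A : Type v}

/-- A quiver version of a cycle set, without the surjectivity of `op a`. -/
structure IsRCOperation (Q : QuiverData Λ A) (op : A → A → A) : Prop where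
  src_op : ∀ a b, Q.src b = Q.src a → Q.src (op a b) = Q.tgt a
  tgt_op_comm : ∀ a b, Q.src a = Q.src b → Q.tgt (op a b) = Q.tgt (op b a)
  op_injOn : ∀ a b b', Q.src b = Q.src a → Q.src b' = Q.src a → op a b = op a b' → b = b'
  rc : ∀ a b c, Q.src a = Q.src b → Q.src a = Q.src c →
    op (op a b) (op a c) = op (op b a) (op b c)

def IsLeftDivision (Q : QuiverData Λ A) (op hdm : A → A → A) : Prop :=
  ∀ a b, Q.tgt a = Q.src b → Q.src (hdm a b) = Q.src a ∧ op a (hdm a b) = b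

namespace IsLeftDivision

variable {Q : QuiverData Λ A} {op hdm : A → A → A}

theorem injOn (hhd : Q.IsLeftDivision op hdm) (x y y' : A) (hy : Q.src y = Q.tgt x)
    (hy' : Q.src y' = Q.tgt x) (h : hdm x y = hdm x y') : y = y' := by
  rw [← (hhd x y hy.symm).2, ← (hhd x y' hy'.symm).2, h]

end IsLeftDivision

namespace IsRCOperation

variable {Q : QuiverData Λ A} {op hdm tlm : A → A → A}

theorem hdm_op (hC : Q.IsRCOperation op) (hhd : Q.IsLeftDivision op hdm) {a c : A}
    (hc : Q.src c = Q.src a) : hdm a (op a c) = c :=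
  have h := hhd a (op a c) (hC.src_op a c hc).symm
  hC.op_injOn a _ c h.1 hc h.2

theorem tlm_op (hC : Q.IsRCOperation op) (hhd : Q.IsLeftDivision op hdm)
    (htl : ∀ a b, tlm a b = op (hdm a b) a) {a c : A} (hc : Q.src c = Q.src a) :
    tlm a (op a c) = op c a := by
  rw [htl, hC.hdm_op hhd hc]

theorem src_op_congr (hC : Q.IsRCOperation op) {a y z : A} (hy : Q.src y = Q.src a)
    (hz : Q.src z = Q.src a) : Q.src (op a y) = Q.src (op a z) :=
  (hC.src_op a y hy).trans (hC.src_op a z hz).symm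

theorem exists_hdm_eq (hC : Q.IsRCOperation op) (hhd : Q.IsLeftDivision op hdm) (x z : A)
    (hz : Q.src z = Q.src x) : ∃ y, Q.src y = Q.tgt x ∧ hdm x y = z :=
  ⟨op x z, hC.src_op x z hz, hC.hdm_op hhd hz⟩

theorem isQuiverMorphism (hC : Q.IsRCOperation op) (hhd : Q.IsLeftDivision op hdm)
    (htl : ∀ a b, tlm a b = op (hdm a b) a) (a b : A) (hab : Q.tgt a = Q.src b) :
    Q.src (hdm a b) = Q.src a ∧ Q.tgt (hdm a b) = Q.src (tlm a b) ∧
      Q.tgt (tlm a b) = Q.tgt b := by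
  obtain ⟨hsrc, hop⟩ := hhd a b hab
  refine ⟨hsrc, ?_, ?_⟩
  · rw [htl, hC.src_op _ _ hsrc.symm]
  · rw [htl, ← hC.tgt_op_comm _ _ hsrc.symm, hop]

theorem involutive (hC : Q.IsRCOperation op) (hhd : Q.IsLeftDivision op hdm)
    (htl : ∀ a b, tlm a b = op (hdm a b) a) (a b : A) (hab : Q.tgt a = Q.src b) :
    hdm (hdm a b) (tlm a b) = a ∧ tlm (hdm a b) (tlm a b) = b := by
  obtain ⟨hsrc, hop⟩ := hhd a b hab
  rw [htl a b, hC.hdm_op hhd hsrc.symm, hC.tlm_op hhd htl hsrc.symm, hop]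
  exact ⟨rfl, rfl⟩

/-- Every composable triple has this form (see `yangBaxter`), and in these coordinates all terms
reduce by `hdm_op`, `tlm_op` and the RC-law. -/
theorem yangBaxter_op (hC : Q.IsRCOperation op) (hhd : Q.IsLeftDivision op hdm)
    (htl : ∀ a b, tlm a b = op (hdm a b) a) {x u w b c : A}
    (hu : Q.src u = Q.src x) (hw : Q.src w = Q.src x)
    (hb : op x u = b) (hc : op (op u x) (op u w) = c) :
    hdm (hdm x b) (hdm (tlm x b) c) = hdm x (hdm b c) ∧
      tlm (hdm x b) (hdm (tlm x b) c) = hdm (tlm x (hdm b c)) (tlm b c) ∧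
      tlm (tlm x b) c = tlm (tlm x (hdm b c)) (tlm b c) := by
  subst hb hc
  have hwu : Q.src w = Q.src u := hw.trans hu.symm
  have hsrc_u : Q.src (op u w) = Q.src (op u x) := hC.src_op_congr hwu hu.symm
  have hsrc_w : Q.src (op w u) = Q.src (op w x) := hC.src_op_congr hwu.symm hw.symm
  have e : hdm (op x u) (op (op u x) (op u w)) = op x w := by
    rw [← hC.rc x u w hu.symm hw.symm, hC.hdm_op hhd (hC.src_op_congr hw hu)]
  refine ⟨?_, ?_, ?_⟩
  · rw [hC.hdm_op hhd hu, hC.tlm_op hhd htl hu, hC.hdm_op hhd (hsrc_u),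
      hC.hdm_op hhd hwu, e, hC.hdm_op hhd hw]
  · rw [hC.hdm_op hhd hu, hC.tlm_op hhd htl hu, hC.hdm_op hhd (hsrc_u),
      hC.tlm_op hhd htl hwu, htl (op x u), e, hC.tlm_op hhd htl hw, hC.rc x w u hw.symm hu.symm,
      hC.hdm_op hhd (hsrc_w)]
  · rw [hC.tlm_op hhd htl hu, htl (op u x), hC.hdm_op hhd (hsrc_u), e,
      hC.tlm_op hhd htl hw, htl (op x u), e, hC.rc x w u hw.symm hu.symm, htl (op w x),
      hC.hdm_op hhd (hsrc_w), hC.rc u w x hwu.symm hu]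

theorem yangBaxter (hC : Q.IsRCOperation op) (hhd : Q.IsLeftDivision op hdm)
    (htl : ∀ a b, tlm a b = op (hdm a b) a) (a b c : A) (hab : Q.tgt a = Q.src b)
    (hbc : Q.tgt b = Q.src c) :
    hdm (hdm a b) (hdm (tlm a b) c) = hdm a (hdm b c) ∧
      tlm (hdm a b) (hdm (tlm a b) c) = hdm (tlm a (hdm b c)) (tlm b c) ∧
      tlm (tlm a b) c = tlm (tlm a (hdm b c)) (tlm b c) := by
  obtain ⟨hu, hb⟩ := hhd a b hab
  obtain ⟨-, htgt_hdm, htgt_tlm⟩ := hC.isQuiverMorphism hhd htl a b hab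
  obtain ⟨hv, hc⟩ := hhd (tlm a b) c (htgt_tlm.trans hbc)
  obtain ⟨hw, hv'⟩ := hhd (hdm a b) (hdm (tlm a b) c) (htgt_hdm.trans hv.symm)
  exact hC.yangBaxter_op hhd htl hu (hw.trans hu) hb (by rw [hv', ← htl, hc])

end IsRCOperation

end QuiverData

/-- Conditions (i), (ii), (ii'), (iii), (iii') and (v) on a presentation `R`, together with
the choice of `z_a` and of the operation `⋆` that they determine. -/
structure RCPresentation {Λ : Type u} {A : Type v} (Q : QuiverData Λ A)
    (R : A × A → A × A → Prop) (star : A → A → A) (zmap : A → A) : Prop where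
  symm : ∀ p q, R p q → R q p
  wf : ∀ p q, R p q → Q.tgt p.1 = Q.src p.2 ∧ Q.tgt q.1 = Q.src q.2 ∧
    Q.src p.1 = Q.src q.1 ∧ Q.tgt p.2 = Q.tgt q.2
  uniq : ∀ p q q', R p q → R p q' → q = q'
  existsUnique_of_src_eq : ∀ a b, a ≠ b → Q.src a = Q.src b →
    ∃! vw : A × A, R (a, vw.1) (b, vw.2)
  existsUnique_of_tgt_eq : ∀ a b, a ≠ b → Q.tgt a = Q.tgt b →
    ∃! vw : A × A, R (vw.1, a) (vw.2, b)
  isZ : ∀ a, IsZ Q R a (zmap a)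
  existsUnique_isZco : ∀ a, ∃! z, IsZco Q R a z
  exists_rel_star : ∀ a b, a ≠ b → Q.src a = Q.src b → ∃ w, R (a, star a b) (b, w)
  rc : ∀ a b c, a ≠ b → b ≠ c → a ≠ c → Q.src a = Q.src b → Q.src a = Q.src c →
    star (star a b) (star a c) = star (star b a) (star b c)

namespace RCPresentation

variable {Λ : Type u} {A : Type v} {Q : QuiverData Λ A} {R : A × A → A × A → Prop}
  {star : A → A → A} {zmap : A → A}

theorem rel_star (H : RCPresentation Q R star zmap) {a b : A} (hab : a ≠ b)
    (hs : Q.src a = Q.src b) : R (a, star a b) (b, star b a) := by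
  obtain ⟨w, hw⟩ := H.exists_rel_star a b hab hs
  obtain ⟨w', hw'⟩ := H.exists_rel_star b a hab.symm hs.symm
  obtain ⟨_, -, hvw⟩ := H.existsUnique_of_src_eq a b hab hs
  have hws : w = star b a :=
    congrArg Prod.snd ((hvw (star a b, w) hw).trans (hvw (w', star b a) (H.symm _ _ hw')).symm)
  rwa [hws] at hw

theorem eq_star_of_rel (H : RCPresentation Q R star zmap) {a v b w : A}
    (h : R (a, v) (b, w)) (hab : a ≠ b) : v = star a b ∧ w = star b a := by
  obtain ⟨_, -, hvw⟩ := H.existsUnique_of_src_eq a b hab (H.wf _ _ h).2.2.1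
  exact Prod.ext_iff.mp
    ((hvw (v, w) h).trans (hvw (star a b, star b a) (H.rel_star hab (H.wf _ _ h).2.2.1)).symm)

theorem eq_zmap_of_rel_self (H : RCPresentation Q R star zmap) {a v w : A}
    (h : R (a, v) (a, w)) : v = zmap a ∧ w = zmap a := by
  have hv : v = zmap a := by
    by_contra hv
    obtain ⟨b, w', hb, h'⟩ := (H.isZ a).2.1 v (H.wf _ _ h).1.symm hv
    exact hb (congrArg Prod.fst (H.uniq _ _ _ h' h))
  subst hv
  exact ⟨rfl, ((H.isZ a).2.2 a w h).2⟩

theorem eq_of_rel_self_of_isZco (H : RCPresentation Q R star zmap) {c v w ζ : A}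
    (hζ : IsZco Q R c ζ) (h : R (v, c) (w, c)) : v = ζ ∧ w = ζ := by
  have hv : v = ζ := by
    by_contra hv
    obtain ⟨b, w', hb, h'⟩ := hζ.2.1 v (H.wf _ _ h).1 hv
    exact hb (congrArg Prod.snd (H.uniq _ _ _ h' h))
  subst hv
  exact ⟨rfl, (hζ.2.2 c w h).2⟩

theorem star_ne_star (H : RCPresentation Q R star zmap) {a b : A} (hab : a ≠ b)
    (hs : Q.src a = Q.src b) : star a b ≠ star b a := by
  intro heq
  have h := H.rel_star hab hs
  rw [heq] at h
  obtain ⟨ζ, hζ, -⟩ := H.existsUnique_isZco (star b a)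
  obtain ⟨ha, hb⟩ := H.eq_of_rel_self_of_isZco hζ h
  exact hab (ha.trans hb.symm)

theorem star_ne_zmap (H : RCPresentation Q R star zmap) {a b : A} (hab : a ≠ b)
    (hs : Q.src a = Q.src b) : star a b ≠ zmap a := by
  intro heq
  have h := H.rel_star hab hs
  rw [heq] at h
  exact hab ((H.isZ a).2.2 b _ h).1.symm

theorem eq_of_isZco_zmap (H : RCPresentation Q R star zmap) {x ζ : A}
    (hζ : IsZco Q R (zmap x) ζ) : x = ζ := by
  by_contra hx
  obtain ⟨b, w, hb, h⟩ := hζ.2.1 x (H.isZ x).1.symm hx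
  exact hb ((H.isZ x).2.2 w b h).2

theorem zmap_eq_of_isZco (H : RCPresentation Q R star zmap) {y ζ : A}
    (hζ : IsZco Q R y ζ) : zmap ζ = y := by
  by_contra hy
  obtain ⟨b, w, hb, h⟩ := (H.isZ ζ).2.1 y hζ.1.symm (Ne.symm hy)
  exact hb (hζ.2.2 w b h).2

theorem zmap_injective (H : RCPresentation Q R star zmap) : Function.Injective zmap := by
  intro x y hxy
  obtain ⟨ζ, hζ, -⟩ := H.existsUnique_isZco (zmap x)
  have hy : y = ζ := H.eq_of_isZco_zmap (hxy ▸ hζ)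
  exact (H.eq_of_isZco_zmap hζ).trans hy.symm

theorem exists_zmap_eq (H : RCPresentation Q R star zmap) (y : A) :
    ∃ x, Q.tgt x = Q.src y ∧ zmap x = y :=
  have ⟨ζ, hζ, _⟩ := H.existsUnique_isZco y
  ⟨ζ, hζ.1, H.zmap_eq_of_isZco hζ⟩

end RCPresentation

namespace RCPresentation

variable {Λ : Type u} {A : Type v} [DecidableEq A] {Q : QuiverData Λ A}
  {R : A × A → A × A → Prop} {star : A → A → A} {zmap : A → A}

theorem starExt_self (a : A) : starExt star zmap a a = zmap a := if_pos rfl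

theorem starExt_of_ne {a b : A} (hab : a ≠ b) : starExt star zmap a b = star a b := if_neg hab

theorem src_starExt (H : RCPresentation Q R star zmap) (a b : A) (hb : Q.src b = Q.src a) :
    Q.src (starExt star zmap a b) = Q.tgt a := by
  by_cases hab : a = b
  · rw [← hab, starExt_self]
    exact (H.isZ a).1
  · rw [starExt_of_ne hab]
    exact (H.wf _ _ (H.rel_star hab hb.symm)).1.symm

theorem tgt_starExt_comm (H : RCPresentation Q R star zmap) (a b : A)
    (hs : Q.src a = Q.src b) :
    Q.tgt (starExt star zmap a b) = Q.tgt (starExt star zmap b a) := by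
  by_cases hab : a = b
  · rw [hab]
  · rw [starExt_of_ne hab, starExt_of_ne (Ne.symm hab)]
    exact (H.wf _ _ (H.rel_star hab hs)).2.2.2

theorem starExt_injOn (H : RCPresentation Q R star zmap) (a b b' : A)
    (hb : Q.src b = Q.src a) (hb' : Q.src b' = Q.src a)
    (h : starExt star zmap a b = starExt star zmap a b') : b = b' := by
  by_cases hab : a = b <;> by_cases hab' : a = b'
  · exact hab.symm.trans hab'
  · rw [← hab, starExt_self, starExt_of_ne hab'] at h
    exact absurd h.symm (H.star_ne_zmap hab' hb'.symm)
  · rw [← hab', starExt_self, starExt_of_ne hab] at h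
    exact absurd h (H.star_ne_zmap hab hb.symm)
  · rw [starExt_of_ne hab, starExt_of_ne hab'] at h
    have hrel := H.rel_star hab hb.symm
    rw [h] at hrel
    exact congrArg Prod.fst (H.uniq _ _ _ hrel (H.rel_star hab' hb'.symm))

theorem exists_starExt_eq (H : RCPresentation Q R star zmap) (a c : A)
    (hc : Q.src c = Q.tgt a) : ∃ b, Q.src b = Q.src a ∧ starExt star zmap a b = c := by
  by_cases hcz : c = zmap a
  · exact ⟨a, rfl, by rw [starExt_self, hcz]⟩
  · obtain ⟨b, w, hb, h⟩ := (H.isZ a).2.1 c hc hcz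
    refine ⟨b, (H.wf _ _ h).2.2.1.symm, ?_⟩
    rw [starExt_of_ne (Ne.symm hb), (H.eq_star_of_rel h (Ne.symm hb)).1]

theorem starExt_rc_of_ne (H : RCPresentation Q R star zmap) {a b c : A} (hab : a ≠ b)
    (hbc : b ≠ c) (hac : a ≠ c) (hs : Q.src a = Q.src b) (hs' : Q.src a = Q.src c) :
    starExt star zmap (starExt star zmap a b) (starExt star zmap a c) =
      starExt star zmap (starExt star zmap b a) (starExt star zmap b c) := by
  have hne : starExt star zmap a b ≠ starExt star zmap a c :=
    fun h => hbc (H.starExt_injOn a b c hs.symm hs'.symm h)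
  have hne' : starExt star zmap b a ≠ starExt star zmap b c :=
    fun h => hac (H.starExt_injOn b a c hs (hs'.symm.trans hs) h)
  simp only [starExt_of_ne hab, starExt_of_ne hac, starExt_of_ne (Ne.symm hab),
    starExt_of_ne hbc] at hne hne' ⊢
  rw [starExt_of_ne hne, starExt_of_ne hne']
  exact H.rc a b c hab hbc hac hs hs'

/-- The case `c = a` of the RC-law for `⋆'`, which needs (iii'). -/
theorem starExt_star_zmap (H : RCPresentation Q R star zmap) {a b : A} (hab : a ≠ b)
    (hs : Q.src a = Q.src b) : starExt star zmap (star a b) (zmap a) = zmap (star b a) := by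
  have hrel := H.rel_star hab hs
  obtain ⟨e, he, hue⟩ := H.exists_starExt_eq (star a b) (zmap (star b a))
    ((H.isZ _).1.trans (H.wf _ _ hrel).2.2.2.symm)
  obtain ⟨c, hc, rfl⟩ := H.exists_starExt_eq a e (he.trans (H.wf _ _ hrel).1.symm)
  by_cases hca : c = a
  · rwa [hca, starExt_self] at hue
  exfalso
  by_cases hcb : c = b
  · rw [hcb, starExt_of_ne hab, starExt_self] at hue
    exact H.star_ne_star hab hs (H.zmap_injective hue)
  · have hrc := H.starExt_rc_of_ne hab (Ne.symm hcb) (Ne.symm hca) hs hc.symm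
    rw [starExt_of_ne hab, hue, starExt_of_ne (Ne.symm hab)] at hrc
    have hsrc : Q.src (starExt star zmap b c) = Q.src (star b a) :=
      (H.src_starExt b c (hc.trans hs)).trans (H.wf _ _ hrel).2.1
    have hcba := H.starExt_injOn (star b a) _ _ hsrc rfl (hrc.symm.trans (starExt_self _).symm)
    exact hca (H.starExt_injOn b c a (hc.trans hs) hs
      (hcba.trans (starExt_of_ne (Ne.symm hab)).symm))

theorem starExt_rc (H : RCPresentation Q R star zmap) (a b c : A) (hab : Q.src a = Q.src b)
    (hac : Q.src a = Q.src c) :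
    starExt star zmap (starExt star zmap a b) (starExt star zmap a c) =
      starExt star zmap (starExt star zmap b a) (starExt star zmap b c) := by
  by_cases h1 : a = b
  · rw [h1]
  by_cases h2 : c = a
  · rw [h2, starExt_self, starExt_of_ne h1, starExt_of_ne (Ne.symm h1), starExt_self]
    exact H.starExt_star_zmap h1 hab
  by_cases h3 : c = b
  · rw [h3, starExt_of_ne h1, starExt_self, starExt_of_ne (Ne.symm h1), starExt_self]
    exact (H.starExt_star_zmap (Ne.symm h1) hab.symm).symm
  exact H.starExt_rc_of_ne h1 (Ne.symm h3) (Ne.symm h2) hab hac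

theorem isRCOperation (H : RCPresentation Q R star zmap) :
    Q.IsRCOperation (starExt star zmap) :=
  ⟨H.src_starExt, H.tgt_starExt_comm, H.starExt_injOn, H.starExt_rc⟩

end RCPresentation

theorem CategoryTheory.Quotient.functor_map_eq_of_forall_rel {C : Type*} [Category C]
    {r₁ r₂ : HomRel C}
    (h : ∀ (X Y : C) (f g : X ⟶ Y), r₁ f g → (functor r₂).map f = (functor r₂).map g)
    {X Y : C} {f g : X ⟶ Y} (hfg : (functor r₁).map f = (functor r₁).map g) :
    (functor r₂).map f = (functor r₂).map g := by
  simpa only [lift_map_functor_map] using congrArg (lift r₁ (functor r₂) h).map hfg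

theorem QuiverData.path2_congr {Λ : Type u} {A : Type v} (Q : QuiverData Λ A) {a m m' b : Λ}
    {x y x' y' : A} (hx : Q.src x = a) (hx' : Q.tgt x = m) (hy : Q.src y = m)
    (hy' : Q.tgt y = b) (hx₂ : Q.src x' = a) (hx₂' : Q.tgt x' = m') (hy₂ : Q.src y' = m')
    (hy₂' : Q.tgt y' = b) (hxx : x = x') (hyy : y = y') :
    Q.path2 x y hx hx' hy hy' = Q.path2 x' y' hx₂ hx₂' hy₂ hy₂' := by
  subst hxx hyy
  obtain rfl : m = m' := hx'.symm.trans hx₂'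
  rfl

namespace RCPresentation

variable {Λ : Type u} {A : Type v} [DecidableEq A] {Q : QuiverData Λ A}
  {R : A × A → A × A → Prop} {star : A → A → A} {zmap : A → A} {hdm tlm : A → A → A}

theorem eq_starExt_of_rel (H : RCPresentation Q R star zmap) {a v b w : A}
    (h : R (a, v) (b, w)) : v = starExt star zmap a b ∧ w = starExt star zmap b a := by
  by_cases hab : a = b
  · subst hab
    simpa only [starExt_self] using H.eq_zmap_of_rel_self h
  · simpa only [starExt_of_ne hab, starExt_of_ne (Ne.symm hab)] using H.eq_star_of_rel h hab

theorem hdm_tlm_of_rel (H : RCPresentation Q R star zmap)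
    (hhd : Q.IsLeftDivision (starExt star zmap) hdm)
    (htl : ∀ a b, tlm a b = starExt star zmap (hdm a b) a) {a v b w : A}
    (h : R (a, v) (b, w)) : hdm a v = b ∧ tlm a v = w := by
  obtain ⟨rfl, rfl⟩ := H.eq_starExt_of_rel h
  have hs : Q.src b = Q.src a := (H.wf _ _ h).2.2.1.symm
  exact ⟨H.isRCOperation.hdm_op hhd hs, H.isRCOperation.tlm_op hhd htl hs⟩

theorem fixed_or_rel (H : RCPresentation Q R star zmap)
    (hhd : Q.IsLeftDivision (starExt star zmap) hdm)
    (htl : ∀ a b, tlm a b = starExt star zmap (hdm a b) a) (x y : A)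
    (hxy : Q.tgt x = Q.src y) :
    (hdm x y = x ∧ tlm x y = y) ∨ R (x, y) (hdm x y, tlm x y) := by
  obtain ⟨hsrc, hop⟩ := hhd x y hxy
  rw [htl]
  generalize hdm x y = u at hsrc hop ⊢
  subst hop
  by_cases hxu : x = u
  · exact Or.inl ⟨hxu.symm, by rw [hxu]⟩
  · right
    simpa only [starExt_of_ne hxu, starExt_of_ne (Ne.symm hxu)] using H.rel_star hxu hsrc.symm

theorem zmap_eq_of_tlm_eq_self (H : RCPresentation Q R star zmap)
    (hhd : Q.IsLeftDivision (starExt star zmap) hdm)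
    (htl : ∀ a b, tlm a b = starExt star zmap (hdm a b) a) {x y : A}
    (hxy : Q.tgt x = Q.src y) (h : tlm x y = y) : zmap x = y := by
  have hx : hdm x y = x := by
    rcases H.fixed_or_rel hhd htl x y hxy with ⟨hx, -⟩ | hrel
    · exact hx
    · rw [h] at hrel
      obtain ⟨ζ, hζ, -⟩ := H.existsUnique_isZco y
      obtain ⟨hxζ, hdmζ⟩ := H.eq_of_rel_self_of_isZco hζ hrel
      exact hdmζ.trans hxζ.symm
  have hop := (hhd x y hxy).2
  rwa [hx, starExt_self] at hop

theorem tlm_injOn (H : RCPresentation Q R star zmap)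
    (hhd : Q.IsLeftDivision (starExt star zmap) hdm)
    (htl : ∀ a b, tlm a b = starExt star zmap (hdm a b) a) (x x' y : A)
    (hx : Q.tgt x = Q.src y) (hx' : Q.tgt x' = Q.src y) (h : tlm x y = tlm x' y) : x = x' := by
  by_cases hy : tlm x y = y
  · exact H.zmap_injective ((H.zmap_eq_of_tlm_eq_self hhd htl hx hy).trans
      (H.zmap_eq_of_tlm_eq_self hhd htl hx' (h ▸ hy)).symm)
  have hrel := (H.fixed_or_rel hhd htl x y hx).resolve_left fun hf => hy hf.2
  have hrel' := (H.fixed_or_rel hhd htl x' y hx').resolve_left fun hf => hy (h ▸ hf.2)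
  rw [← h] at hrel'
  obtain ⟨_, -, huniq⟩ := H.existsUnique_of_tgt_eq y (tlm x y) (Ne.symm hy) (H.wf _ _ hrel).2.2.2
  exact congrArg Prod.fst ((huniq (x, hdm x y) hrel).trans (huniq (x', hdm x' y) hrel').symm)

theorem exists_tlm_eq (H : RCPresentation Q R star zmap)
    (hhd : Q.IsLeftDivision (starExt star zmap) hdm)
    (htl : ∀ a b, tlm a b = starExt star zmap (hdm a b) a) (y z : A)
    (hz : Q.tgt z = Q.tgt y) : ∃ x, Q.tgt x = Q.src y ∧ tlm x y = z := by
  by_cases hzy : z = y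
  · subst hzy
    obtain ⟨x, hx, rfl⟩ := H.exists_zmap_eq z
    refine ⟨x, hx, ?_⟩
    simpa only [starExt_self] using H.isRCOperation.tlm_op hhd htl (rfl : Q.src x = Q.src x)
  · obtain ⟨⟨x, u⟩, hrel, -⟩ := H.existsUnique_of_tgt_eq y z (Ne.symm hzy) hz.symm
    exact ⟨x, (H.wf _ _ hrel).1, (H.hdm_tlm_of_rel hhd htl hrel).2⟩

theorem functor_map_eq_iff (H : RCPresentation Q R star zmap)
    (hhd : Q.IsLeftDivision (starExt star zmap) hdm)
    (htl : ∀ a b, tlm a b = starExt star zmap (hdm a b) a) (X Y : Paths Q.V) (f g : X ⟶ Y) :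
    (Quotient.functor (presRel Q R)).map f = (Quotient.functor (presRel Q R)).map g ↔
      (Quotient.functor (Q.ybRel hdm tlm)).map f =
        (Quotient.functor (Q.ybRel hdm tlm)).map g := by
  refine ⟨Quotient.functor_map_eq_of_forall_rel ?_, Quotient.functor_map_eq_of_forall_rel ?_⟩
  · rintro _ _ _ _ ⟨a, v, b, w, hrel, hav, hbw, hab, hvw⟩
    obtain ⟨rfl, rfl⟩ := H.hdm_tlm_of_rel hhd htl hrel
    exact CategoryTheory.Quotient.sound _ (QuiverData.ybRel.mk a v hav hab.symm hbw hvw.symm)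
  · rintro _ _ _ _ ⟨x, y, hxy, h₁, h₂, h₃⟩
    rcases H.fixed_or_rel hhd htl x y hxy with ⟨hx, hy⟩ | hrel
    · exact congrArg _ (Q.path2_congr _ _ _ _ _ _ _ _ hx.symm hy.symm)
    · exact CategoryTheory.Quotient.sound _ (presRel.mk x y (hdm x y) (tlm x y) hrel hxy h₂ h₁.symm h₃.symm)

end RCPresentation

theorem converse_connection_general
    {Λ : Type u} {A : Type v} [DecidableEq A] (Q : QuiverData Λ A)
    -- `R` is a set of quadratic relations `a|v ∼ b|w`, viewed as a symmetric relation
    -- on length-2 paths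
    (R : A × A → A × A → Prop)
    (hsymm : ∀ p q, R p q → R q p)
    (hwf : ∀ p q, R p q → Q.tgt p.1 = Q.src p.2 ∧ Q.tgt q.1 = Q.src q.2 ∧
      Q.src p.1 = Q.src q.1 ∧ Q.tgt p.2 = Q.tgt q.2)
    -- (i) every length-2 path appears in at most one relation of `R`
    (huniq : ∀ p q q', R p q → R p q' → q = q')
    -- (ii) for `a ≠ b` with the same source, exactly one relation `a|v ∼ b|w`
    (hii : ∀ a b, a ≠ b → Q.src a = Q.src b → ∃! vw : A × A, R (a, vw.1) (b, vw.2))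
    -- (ii') for `a ≠ b` with the same target, exactly one relation `v|a ∼ w|b`
    (hii' : ∀ a b, a ≠ b → Q.tgt a = Q.tgt b → ∃! vw : A × A, R (vw.1, a) (vw.2, b))
    -- (iii) `z_a` is the unique arrow satisfying `IsZ`
    (zmap : A → A)
    (hz : ∀ a, IsZ Q R a (zmap a))
    -- (iii') for every `a` there is a unique arrow `z^a` satisfying `IsZco`
    (hz' : ∀ a, ∃! z, IsZco Q R a z)
    -- the partial operation `⋆` determined by `R`: for `a ≠ b` with the same source,
    -- `a ⋆ b` is the unique `v` with `(a|v ∼ b|w) ∈ R` for some `w`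
    (star : A → A → A)
    (hstar : ∀ a b, a ≠ b → Q.src a = Q.src b → ∃ w, R (a, star a b) (b, w))
    -- (v) the RC-law for `⋆`
    (hrc : ∀ a b c, a ≠ b → b ≠ c → a ≠ c → Q.src a = Q.src b → Q.src a = Q.src c →
      star (star a b) (star a c) = star (star b a) (star b c))
    -- the map `⇀`: `a ⇀ b` is the unique arrow `c` with `a ⋆' c = b`
    (hdm : A → A → A)
    (hhd : ∀ a b, Q.tgt a = Q.src b →
      Q.src (hdm a b) = Q.src a ∧ starExt star zmap a (hdm a b) = b)
    -- the map `↼`: `a ↼ b := (a ⇀ b) ⋆' a`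
    (tlm : A → A → A)
    (htl : ∀ a b, tlm a b = starExt star zmap (hdm a b) a) :
    -- conclusion 1: each `b ↦ a ⋆' b` is a bijection from arrows with source `s a`
    -- to arrows with source `t a`
    ((∀ a b, Q.src b = Q.src a → Q.src (starExt star zmap a b) = Q.tgt a) ∧
      (∀ a b b', Q.src b = Q.src a → Q.src b' = Q.src a →
        starExt star zmap a b = starExt star zmap a b' → b = b') ∧
      (∀ a c, Q.src c = Q.tgt a → ∃ b, Q.src b = Q.src a ∧ starExt star zmap a b = c)) ∧
    -- conclusion 2: `σ(a,b) = (a ⇀ b, a ↼ b)` is a morphism of quivers …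
    (∀ a b, Q.tgt a = Q.src b →
      Q.src (hdm a b) = Q.src a ∧ Q.tgt (hdm a b) = Q.src (tlm a b) ∧
        Q.tgt (tlm a b) = Q.tgt b) ∧
    -- … satisfying the Yang–Baxter equation …
    (∀ a b c, Q.tgt a = Q.src b → Q.tgt b = Q.src c →
      hdm (hdm a b) (hdm (tlm a b) c) = hdm a (hdm b c) ∧
      tlm (hdm a b) (hdm (tlm a b) c) = hdm (tlm a (hdm b c)) (tlm b c) ∧
      tlm (tlm a b) c = tlm (tlm a (hdm b c)) (tlm b c)) ∧
    -- … involutive …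
    (∀ a b, Q.tgt a = Q.src b →
      hdm (hdm a b) (tlm a b) = a ∧ tlm (hdm a b) (tlm a b) = b) ∧
    -- … left-non-degenerate …
    ((∀ x y y', Q.src y = Q.tgt x → Q.src y' = Q.tgt x → hdm x y = hdm x y' → y = y') ∧
      (∀ x z, Q.src z = Q.src x → ∃ y, Q.src y = Q.tgt x ∧ hdm x y = z)) ∧
    -- … and right-non-degenerate:
    ((∀ x x' y, Q.tgt x = Q.src y → Q.tgt x' = Q.src y → tlm x y = tlm x' y → x = x') ∧
      (∀ y z, Q.tgt z = Q.tgt y → ∃ x, Q.tgt x = Q.src y ∧ tlm x y = z)) ∧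
    -- conclusion 3: the congruence generated by `R` coincides with the congruence
    -- generated by `x|y ∼ (x ⇀ y)|(x ↼ y)`, i.e. `⟨𝒜 ∣ R⟩⁺ = C(σ)`
    (∀ (X Y : Paths Q.V) (f g : X ⟶ Y),
      (Quotient.functor (presRel Q R)).map f = (Quotient.functor (presRel Q R)).map g ↔
        (Quotient.functor (Q.ybRel hdm tlm)).map f =
          (Quotient.functor (Q.ybRel hdm tlm)).map g) := by
  have H : RCPresentation Q R star zmap := ⟨hsymm, hwf, huniq, hii, hii', hz, hz', hstar, hrc⟩
  have hC := H.isRCOperation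
  exact ⟨⟨hC.src_op, hC.op_injOn, H.exists_starExt_eq⟩, hC.isQuiverMorphism hhd htl,
    hC.yangBaxter hhd htl, hC.involutive hhd htl, ⟨QuiverData.IsLeftDivision.injOn hhd, hC.exists_hdm_eq hhd⟩,
    ⟨H.tlm_injOn hhd htl, H.exists_tlm_eq hhd htl⟩, H.functor_map_eq_iff hhd htl⟩

theorem converse_connection
    {Λ : Type u} {A : Type v} [DecidableEq A] (Q : QuiverData Λ A)
    -- `R` is a set of quadratic relations `a|v ∼ b|w`, viewed as a symmetric relation
    -- on length-2 paths
    (R : A × A → A × A → Prop)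
    (hsymm : ∀ p q, R p q → R q p)
    (hwf : ∀ p q, R p q → Q.tgt p.1 = Q.src p.2 ∧ Q.tgt q.1 = Q.src q.2 ∧
      Q.src p.1 = Q.src q.1 ∧ Q.tgt p.2 = Q.tgt q.2)
    -- (i) every length-2 path appears in at most one relation of `R`
    (huniq : ∀ p q q', R p q → R p q' → q = q')
    -- (ii) for `a ≠ b` with the same source, exactly one relation `a|v ∼ b|w`
    (hii : ∀ a b, a ≠ b → Q.src a = Q.src b → ∃! vw : A × A, R (a, vw.1) (b, vw.2))
    -- (ii') for `a ≠ b` with the same target, exactly one relation `v|a ∼ w|b`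
    (hii' : ∀ a b, a ≠ b → Q.tgt a = Q.tgt b → ∃! vw : A × A, R (vw.1, a) (vw.2, b))
    -- (iii) `z_a` is the unique arrow satisfying `IsZ`
    (zmap : A → A)
    (hz : ∀ a, IsZ Q R a (zmap a))
    (hzu : ∀ a z, IsZ Q R a z → z = zmap a)
    -- (iii') for every `a` there is a unique arrow `z^a` satisfying `IsZco`
    (hz' : ∀ a, ∃! z, IsZco Q R a z)
    -- the partial operation `⋆` determined by `R`: for `a ≠ b` with the same source,
    -- `a ⋆ b` is the unique `v` with `(a|v ∼ b|w) ∈ R` for some `w`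
    (star : A → A → A)
    (hstar : ∀ a b, a ≠ b → Q.src a = Q.src b → ∃ w, R (a, star a b) (b, w))
    -- (v) the RC-law for `⋆`
    (hrc : ∀ a b c, a ≠ b → b ≠ c → a ≠ c → Q.src a = Q.src b → Q.src a = Q.src c →
      star (star a b) (star a c) = star (star b a) (star b c))
    -- the map `⇀`: `a ⇀ b` is the unique arrow `c` with `a ⋆' c = b`
    (hdm : A → A → A)
    (hhd : ∀ a b, Q.tgt a = Q.src b →
      Q.src (hdm a b) = Q.src a ∧ starExt star zmap a (hdm a b) = b)
    -- the map `↼`: `a ↼ b := (a ⇀ b) ⋆' a`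
    (tlm : A → A → A)
    (htl : ∀ a b, tlm a b = starExt star zmap (hdm a b) a) :
    -- conclusion 1: each `b ↦ a ⋆' b` is a bijection from arrows with source `s a`
    -- to arrows with source `t a`
    ((∀ a b, Q.src b = Q.src a → Q.src (starExt star zmap a b) = Q.tgt a) ∧
      (∀ a b b', Q.src b = Q.src a → Q.src b' = Q.src a →
        starExt star zmap a b = starExt star zmap a b' → b = b') ∧
      (∀ a c, Q.src c = Q.tgt a → ∃ b, Q.src b = Q.src a ∧ starExt star zmap a b = c)) ∧
    -- conclusion 2: `σ(a,b) = (a ⇀ b, a ↼ b)` is a morphism of quivers …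
    (∀ a b, Q.tgt a = Q.src b →
      Q.src (hdm a b) = Q.src a ∧ Q.tgt (hdm a b) = Q.src (tlm a b) ∧
        Q.tgt (tlm a b) = Q.tgt b) ∧
    -- … satisfying the Yang–Baxter equation …
    (∀ a b c, Q.tgt a = Q.src b → Q.tgt b = Q.src c →
      hdm (hdm a b) (hdm (tlm a b) c) = hdm a (hdm b c) ∧
      tlm (hdm a b) (hdm (tlm a b) c) = hdm (tlm a (hdm b c)) (tlm b c) ∧
      tlm (tlm a b) c = tlm (tlm a (hdm b c)) (tlm b c)) ∧
    -- … involutive …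
    (∀ a b, Q.tgt a = Q.src b →
      hdm (hdm a b) (tlm a b) = a ∧ tlm (hdm a b) (tlm a b) = b) ∧
    -- … left-non-degenerate …
    ((∀ x y y', Q.src y = Q.tgt x → Q.src y' = Q.tgt x → hdm x y = hdm x y' → y = y') ∧
      (∀ x z, Q.src z = Q.src x → ∃ y, Q.src y = Q.tgt x ∧ hdm x y = z)) ∧
    -- … and right-non-degenerate:
    ((∀ x x' y, Q.tgt x = Q.src y → Q.tgt x' = Q.src y → tlm x y = tlm x' y → x = x') ∧
      (∀ y z, Q.tgt z = Q.tgt y → ∃ x, Q.tgt x = Q.src y ∧ tlm x y = z)) ∧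
    -- conclusion 3: the congruence generated by `R` coincides with the congruence
    -- generated by `x|y ∼ (x ⇀ y)|(x ↼ y)`, i.e. `⟨𝒜 ∣ R⟩⁺ = C(σ)`
    (∀ (X Y : Paths Q.V) (f g : X ⟶ Y),
      (Quotient.functor (presRel Q R)).map f = (Quotient.functor (presRel Q R)).map g ↔
        (Quotient.functor (Q.ybRel hdm tlm)).map f =
          (Quotient.functor (Q.ybRel hdm tlm)).map g) :=
  converse_connection_general Q R hsymm hwf huniq hii hii' zmap hz hz' star hstar hrc hdm hhd tlm
    htl
end
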